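/- arXiv:1903.00434 — 8 statements merged into one kernel-verified Lean document; each statement's English description precedes it below -/
import Mathlib

section
/- Suppose X has finite second moments with covariance matrix Σ, and (X, X̃) satisfies pairwise exchangeability. Then there exists a vector s ∈ R^p such that Cov(X, X̃) equals the 2p × 2p block matrix with diagonal blocks Σ and off-diagonal blocks Σ − diag(s); in particular, Cov(X_i, X̃_j) = Cov(X_i, X_j) for all i ≠ j. -/
open MeasureTheory

/-- Swapping the coordinates indexed by `A` between the two halves of a pair of
vectors. -/
noncomputable def swapSet {p : ℕ} (A : Finset (Fin p)) :
    ((Fin p → ℝ) × (Fin p → ℝ)) → ((Fin p → ℝ) × (Fin p → ℝ)) :=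
  fun z => (fun i => if i ∈ A then z.2 i else z.1 i,
            fun i => if i ∈ A then z.1 i else z.2 i)

/-- Covariance of two real random variables on `(Ω, μ)`. -/
noncomputable def cov {Ω : Type*} [MeasurableSpace Ω] (μ : Measure Ω)
    (f g : Ω → ℝ) : ℝ :=
  (∫ ω, f ω * g ω ∂μ) - (∫ ω, f ω ∂μ) * (∫ ω, g ω ∂μ)

/-! Swapping `X_j` with `X̃_j` preserves the joint law, hence the integral of every measurable
function of `(X, X̃)`. Swapping `j` equates the means of `X̃_j` and `X_j` and, for `i ≠ j`, the
moments `E[X_i X̃_j]` and `E[X_i X_j]`; swapping `i` turns `E[X̃_i X̃_j]` into `E[X_i X_j]` (directly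
if `i = j`, via the previous identity otherwise). Only the diagonal `Cov(X_j, X̃_j)` is left free,
and `s_j` is its defect from `Σ_jj`. -/

theorem measurable_swapSet {p : ℕ} (A : Finset (Fin p)) : Measurable (swapSet A) := by
  unfold swapSet
  refine (measurable_pi_lambda _ fun i => ?_).prodMk (measurable_pi_lambda _ fun i => ?_) <;>
    split_ifs <;> fun_prop

theorem integral_comp_eq_of_map_map_eq {Ω E G : Type*} [MeasurableSpace Ω] [MeasurableSpace E]
    [NormedAddCommGroup G] [NormedSpace ℝ G] {μ : Measure Ω} {Z : Ω → E} {T : E → E}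
    (hZ : AEMeasurable Z μ) (hT : Measurable T) (hinv : (μ.map Z).map T = μ.map Z)
    {h : E → G} (hh : StronglyMeasurable h) :
    ∫ ω, h (T (Z ω)) ∂μ = ∫ ω, h (Z ω) ∂μ := by
  calc ∫ ω, h (T (Z ω)) ∂μ = ∫ y, h (T y) ∂μ.map Z :=
        (integral_map hZ (hh.comp_measurable hT).aestronglyMeasurable).symm
    _ = ∫ y, h y ∂(μ.map Z).map T := (integral_map hT.aemeasurable hh.aestronglyMeasurable).symm
    _ = ∫ ω, h (Z ω) ∂μ := by rw [hinv, integral_map hZ hh.aestronglyMeasurable]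

section Exchangeable

variable {Ω : Type*} [MeasurableSpace Ω] {μ : Measure Ω} {p : ℕ} {X Xt : Ω → Fin p → ℝ}

def PairwiseExchangeable (μ : Measure Ω) (X Xt : Ω → Fin p → ℝ) : Prop :=
  ∀ j : Fin p, (μ.map (fun ω => (X ω, Xt ω))).map (swapSet {j}) = μ.map (fun ω => (X ω, Xt ω))

theorem PairwiseExchangeable.integral_swap (hpair : PairwiseExchangeable μ X Xt)
    (hX : Measurable X) (hXt : Measurable Xt) (j : Fin p)
    {h : (Fin p → ℝ) × (Fin p → ℝ) → ℝ} (hh : Measurable h) :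
    ∫ ω, h (swapSet {j} (X ω, Xt ω)) ∂μ = ∫ ω, h (X ω, Xt ω) ∂μ :=
  integral_comp_eq_of_map_map_eq (hX.prodMk hXt).aemeasurable (measurable_swapSet _) (hpair j)
    hh.stronglyMeasurable

theorem PairwiseExchangeable.integral_knockoff (hpair : PairwiseExchangeable μ X Xt)
    (hX : Measurable X) (hXt : Measurable Xt) (j : Fin p) :
    ∫ ω, Xt ω j ∂μ = ∫ ω, X ω j ∂μ := by
  simpa [swapSet] using (hpair.integral_swap hX hXt j (h := fun z => z.2 j) (by fun_prop)).symm

theorem PairwiseExchangeable.integral_mul_knockoff_of_ne (hpair : PairwiseExchangeable μ X Xt)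
    (hX : Measurable X) (hXt : Measurable Xt) {i j : Fin p} (hij : i ≠ j) :
    ∫ ω, X ω i * Xt ω j ∂μ = ∫ ω, X ω i * X ω j ∂μ := by
  simpa [swapSet, hij] using
    (hpair.integral_swap hX hXt j (h := fun z => z.1 i * z.2 j) (by fun_prop)).symm

theorem PairwiseExchangeable.integral_knockoff_mul_knockoff
    (hpair : PairwiseExchangeable μ X Xt) (hX : Measurable X) (hXt : Measurable Xt) (i j : Fin p) :
    ∫ ω, Xt ω i * Xt ω j ∂μ = ∫ ω, X ω i * X ω j ∂μ := by
  have hswap := hpair.integral_swap hX hXt i (h := fun z => z.2 i * z.2 j) (by fun_prop)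
  obtain rfl | hij := eq_or_ne i j
  · simpa [swapSet] using hswap.symm
  · simp only [swapSet, Finset.mem_singleton, hij.symm, if_true, if_false] at hswap
    rw [← hswap, hpair.integral_mul_knockoff_of_ne hX hXt hij]

theorem PairwiseExchangeable.cov_knockoff_knockoff (hpair : PairwiseExchangeable μ X Xt)
    (hX : Measurable X) (hXt : Measurable Xt) (i j : Fin p) :
    cov μ (fun ω => Xt ω i) (fun ω => Xt ω j) = cov μ (fun ω => X ω i) (fun ω => X ω j) := by
  simp only [cov, hpair.integral_knockoff_mul_knockoff hX hXt, hpair.integral_knockoff hX hXt]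

theorem PairwiseExchangeable.cov_knockoff_of_ne (hpair : PairwiseExchangeable μ X Xt)
    (hX : Measurable X) (hXt : Measurable Xt) {i j : Fin p} (hij : i ≠ j) :
    cov μ (fun ω => X ω i) (fun ω => Xt ω j) = cov μ (fun ω => X ω i) (fun ω => X ω j) := by
  simp only [cov, hpair.integral_mul_knockoff_of_ne hX hXt hij, hpair.integral_knockoff hX hXt]

end Exchangeable

theorem stmt2_general {Ω : Type*} [MeasurableSpace Ω] (μ : Measure Ω)
    {p : ℕ} (X Xt : Ω → Fin p → ℝ)
    (hX : Measurable X) (hXt : Measurable Xt)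
    (hpair : ∀ j : Fin p,
      (μ.map (fun ω => (X ω, Xt ω))).map (swapSet {j}) =
        μ.map (fun ω => (X ω, Xt ω))) :
    ∃ s : Fin p → ℝ,
      (∀ i j, cov μ (fun ω => Xt ω i) (fun ω => Xt ω j) =
        cov μ (fun ω => X ω i) (fun ω => X ω j)) ∧
      (∀ i j, i ≠ j → cov μ (fun ω => X ω i) (fun ω => Xt ω j) =
        cov μ (fun ω => X ω i) (fun ω => X ω j)) ∧
      (∀ j, cov μ (fun ω => X ω j) (fun ω => Xt ω j) =
        cov μ (fun ω => X ω j) (fun ω => X ω j) - s j) := by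
  have hexch : PairwiseExchangeable μ X Xt := hpair
  refine ⟨fun j => cov μ (fun ω => X ω j) (fun ω => X ω j) - cov μ (fun ω => X ω j) (fun ω => Xt ω j),
    hexch.cov_knockoff_knockoff hX hXt, fun i j => hexch.cov_knockoff_of_ne hX hXt, fun j => ?_⟩
  ring

/-- If `X` has finite second moments with covariance `Σ` and `(X, X̃)` is
pairwise exchangeable, then there is a vector `s` such that `Cov(X, X̃)` has the
knockoff block structure: `Cov(X̃_i, X̃_j) = Σ_ij`, `Cov(X_i, X̃_j) = Σ_ij` for
`i ≠ j`, and `Cov(X_j, X̃_j) = Σ_jj − s_j`. -/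
theorem stmt2 {Ω : Type*} [MeasurableSpace Ω] (μ : Measure Ω)
    [IsProbabilityMeasure μ] {p : ℕ} (X Xt : Ω → Fin p → ℝ)
    (hX : Measurable X) (hXt : Measurable Xt)
    (hL2X : ∀ i, MemLp (fun ω => X ω i) 2 μ)
    (hL2Xt : ∀ i, MemLp (fun ω => Xt ω i) 2 μ)
    (hpair : ∀ j : Fin p,
      (μ.map (fun ω => (X ω, Xt ω))).map (swapSet {j}) =
        μ.map (fun ω => (X ω, Xt ω))) :
    ∃ s : Fin p → ℝ,
      (∀ i j, cov μ (fun ω => Xt ω i) (fun ω => Xt ω j) =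
        cov μ (fun ω => X ω i) (fun ω => X ω j)) ∧
      (∀ i j, i ≠ j → cov μ (fun ω => X ω i) (fun ω => Xt ω j) =
        cov μ (fun ω => X ω i) (fun ω => X ω j)) ∧
      (∀ j, cov μ (fun ω => X ω j) (fun ω => Xt ω j) =
        cov μ (fun ω => X ω j) (fun ω => X ω j) - s j) :=
  stmt2_general μ X Xt hX hXt hpair
end

section
/- Let (X, X̃) ∈ R^{2p} be a random vector. Pairwise exchangeability ((X,X̃)_{swap(j)} ≐ (X,X̃) for each j) holds if and only if both of the following hold for each j ∈ {1,...,p}: (1) conditional exchangeability: (X_j, X̃_j) and (X̃_j, X_j) have the same conditional distribution given (X_{-j}, X̃_{1:(j-1)}); and (2) knockoff symmetry: for any Borel set A, the conditional probability P((X_j, X̃_j) ∈ A | X_{-j}, X̃_{1:(j-1)}) is measurable with respect to the sigma-algebra generated by X_{(j+1):p} and the unordered pairs {X_1, X̃_1}, ..., {X_{j-1}, X̃_{j-1}}. -/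
open MeasureTheory

variable {Ω : Type*} [MeasurableSpace Ω]

/-- Swap the `j`-th coordinates of a pair of vectors. -/
noncomputable def swapPair {p : ℕ} (j : Fin p) :
    ((Fin p → ℝ) × (Fin p → ℝ)) → ((Fin p → ℝ) × (Fin p → ℝ)) :=
  fun z => (Function.update z.1 j (z.2 j), Function.update z.2 j (z.1 j))

/-- The σ-algebra generated by `X₋ⱼ` (all coordinates of `X` except `j`) and
`X̃_{1:(j-1)}` (the knockoff coordinates with index `< j`). -/
def condAlg {p : ℕ} (X Xt : Ω → Fin p → ℝ) (j : Fin p) : MeasurableSpace Ω :=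
  MeasurableSpace.comap
    (fun ω => ((fun i : {i : Fin p // i ≠ j} => X ω i),
               (fun i : {i : Fin p // (i : Fin p) < j} => Xt ω i)))
    inferInstance

/-- The σ-algebra generated by `X_{(j+1):p}` and the unordered pairs
`{X_k, X̃_k}` for `k < j` (an unordered pair of reals is encoded by the pair
`(min, max)`). -/
def symAlg {p : ℕ} (X Xt : Ω → Fin p → ℝ) (j : Fin p) : MeasurableSpace Ω :=
  MeasurableSpace.comap
    (fun ω => ((fun i : {i : Fin p // j < i} => X ω i),
               (fun i : {i : Fin p // (i : Fin p) < j} =>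
                 (min (X ω i) (Xt ω i), max (X ω i) (Xt ω i)))))
    inferInstance

/-!
Write `W_j = (X₋ⱼ, X̃_{1:(j-1)})` and `V_j = (X_j, X̃_j)`. Exchanging `X_j` and `X̃_j` fixes
`W_j` and flips `V_j`, so on the pair `(W_j, V_j)` pairwise exchangeability at `j` is exactly
conditional exchangeability.

Exchanging pairs with indices `k < j` acts on `W_j` alone, by involutions `τ`. If
`(τ W_j, V_j) ≐ (W_j, V_j)`, the conditional probability `h(W_j)` satisfies `h ∘ τ = h` a.e.;
at every point, sorting the pairs `{X_k, X̃_k}` is one of these `τ`, so `h(W_j)` is a.e. a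
function of the unordered pairs. Conversely, if `τ W_m ≐ W_m` and the conditional probability
is a function of the (`τ`-invariant) unordered pairs, then `(τ W_m, V_m) ≐ (W_m, V_m)`.

For the converse direction fix `j`; by induction on `n ≥ j`, exchanging `X_j` and `X̃_j`
preserves the law of `(X, X̃_{1:n})`. At `n = j` this is conditional exchangeability, since
`(X, X̃_{1:j})` is a function of `(W_j, V_j)`. For `m > j`, the case `n = m - 1` says that
exchanging the `j`-th pair inside `W_m` preserves its law, knockoff symmetry at `m` upgrades this
to the law of `(W_m, V_m)`, and `(W_m, V_m)` determines `(X, X̃_{1:m})`.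
-/

section ConditionalProbability

open Function

@[fun_prop]
lemma measurable_dite_const {α β : Type*} [MeasurableSpace α] [MeasurableSpace β]
    {c : Prop} [Decidable c] {f : c → α → β} {g : ¬c → α → β}
    (hf : ∀ h, Measurable (f h)) (hg : ∀ h, Measurable (g h)) :
    Measurable (fun a => if h : c then f h a else g h a) := by
  by_cases h : c
  · simpa [h] using hf h
  · simpa [h] using hg h

@[fun_prop]
lemma measurable_ite_const {α β : Type*} [MeasurableSpace α] [MeasurableSpace β]
    {c : Prop} [Decidable c] {f g : α → β} (hf : Measurable f) (hg : Measurable g) :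
    Measurable (fun a => if c then f a else g a) :=
  measurable_dite_const (fun _ => hf) (fun _ => hg)

lemma comap_comp_eq_of_involutive {Ω β : Type*} [MeasurableSpace β] {τ : β → β}
    (hτ : Measurable τ) (hinv : Involutive τ) (W : Ω → β) :
    MeasurableSpace.comap (fun ω => τ (W ω)) inferInstance =
      MeasurableSpace.comap W inferInstance := by
  have comap_le : ∀ W : Ω → β, MeasurableSpace.comap (fun ω => τ (W ω)) inferInstance ≤
      MeasurableSpace.comap W inferInstance := fun W => by
    show MeasurableSpace.comap (τ ∘ W) _ ≤ _
    rw [← MeasurableSpace.comap_comp]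
    exact MeasurableSpace.comap_mono hτ.comap_le
  refine le_antisymm (comap_le W) ?_
  simpa only [hinv _] using comap_le fun ω => τ (W ω)

lemma MeasureTheory.AEStronglyMeasurable.exists_ae_eq_measurable_comp {Ω δ : Type*}
    [MeasurableSpace Ω] [MeasurableSpace δ] {μ : Measure Ω} {Φ : Ω → δ} {f : Ω → ℝ}
    (hf : AEStronglyMeasurable[MeasurableSpace.comap Φ inferInstance] f μ) :
    ∃ g : δ → ℝ, Measurable g ∧ f =ᵐ[μ] g ∘ Φ := by
  obtain ⟨f₀, hf₀, hae⟩ := hf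
  obtain ⟨g, hg, rfl⟩ := hf₀.exists_eq_measurable_comp
  exact ⟨g, hg.measurable, hae⟩

lemma map_map_eq_of_semiconj {Ω α α' : Type*} [MeasurableSpace Ω] [MeasurableSpace α]
    [MeasurableSpace α'] {μ : Measure Ω} {Z : Ω → α} {f : α → α'} {ρ : α → α} {g : α' → α'}
    (hZ : Measurable Z) (hf : Measurable f) (hρ : Measurable ρ) (hg : Measurable g)
    (hinv : (μ.map Z).map ρ = μ.map Z) (h : Semiconj f ρ g) :
    (μ.map (fun ω => f (Z ω))).map g = μ.map (fun ω => f (Z ω)) := by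
  have hfρ := congrArg (Measure.map f) hinv
  rw [Measure.map_map hf hρ, Measure.map_map hf hZ, Measure.map_map (hf.comp hρ) hZ] at hfρ
  show (μ.map (f ∘ Z)).map g = μ.map (f ∘ Z)
  rw [Measure.map_map hg (hf.comp hZ), ← hfρ]
  exact congrArg (μ.map ·) (funext fun ω => (h (Z ω)).symm)

lemma indicator_one_comp {Ω γ : Type*} (V : Ω → γ) (A : Set γ) :
    (fun ω => A.indicator (fun _ => (1 : ℝ)) (V ω)) = (V ⁻¹' A).indicator (fun _ => 1) :=
  funext fun _ => (Set.indicator_comp_right V).symm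

noncomputable def condProb {Ω β γ : Type*} [MeasurableSpace Ω] [MeasurableSpace β]
    (μ : Measure Ω) (W : Ω → β) (V : Ω → γ) (A : Set γ) : Ω → ℝ :=
  μ[fun ω => A.indicator (fun _ => (1 : ℝ)) (V ω) | MeasurableSpace.comap W inferInstance]

lemma condProb_comp_of_involutive {Ω β γ : Type*} [MeasurableSpace Ω] [MeasurableSpace β]
    {μ : Measure Ω} {W : Ω → β} {V : Ω → γ} {A : Set γ} {τ : β → β}
    (hτ : Measurable τ) (hinv : Involutive τ) :
    condProb μ (fun ω => τ (W ω)) V A = condProb μ W V A := by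
  rw [condProb, condProb, comap_comp_eq_of_involutive hτ hinv]

variable {Ω β γ δ : Type*} [MeasurableSpace Ω] [MeasurableSpace β] [MeasurableSpace γ]
  {μ : Measure Ω} {W W' : Ω → β} {V V' : Ω → γ} {A : Set γ}

lemma setIntegral_indicator_one_comp (hV : Measurable V) (hA : MeasurableSet A) (s : Set Ω) :
    ∫ ω in s, A.indicator (fun _ => (1 : ℝ)) (V ω) ∂μ = μ.real (s ∩ V ⁻¹' A) := by
  rw [indicator_one_comp, setIntegral_indicator (hV hA), setIntegral_const, smul_eq_mul, mul_one]

lemma setIntegral_comp_eq_of_map_eq (hW : Measurable W) (hW' : Measurable W')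
    (h : μ.map W = μ.map W') {k : β → ℝ} (hk : Measurable k) {B : Set β} (hB : MeasurableSet B) :
    ∫ ω in W ⁻¹' B, k (W ω) ∂μ = ∫ ω in W' ⁻¹' B, k (W' ω) ∂μ := by
  rw [← setIntegral_map hB hk.aestronglyMeasurable hW.aemeasurable, h,
    setIntegral_map hB hk.aestronglyMeasurable hW'.aemeasurable]

variable [IsFiniteMeasure μ]

lemma integrable_indicator_one_comp (hV : Measurable V) (hA : MeasurableSet A) :
    Integrable (fun ω => A.indicator (fun _ => (1 : ℝ)) (V ω)) μ := by
  rw [indicator_one_comp]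
  exact (integrable_const 1).indicator (hV hA)

lemma setIntegral_condProb (hW : Measurable W) (hV : Measurable V) (hA : MeasurableSet A)
    {B : Set β} (hB : MeasurableSet B) :
    ∫ ω in W ⁻¹' B, condProb μ W V A ω ∂μ = μ.real (W ⁻¹' B ∩ V ⁻¹' A) :=
  (setIntegral_condExp hW.comap_le (integrable_indicator_one_comp hV hA) ⟨B, hB, rfl⟩).trans
    (setIntegral_indicator_one_comp hV hA _)

lemma ae_eq_condProb_of_setIntegral_eq (hW : Measurable W) (hV : Measurable V)
    (hA : MeasurableSet A) {g : Ω → ℝ}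
    (hg : StronglyMeasurable[MeasurableSpace.comap W inferInstance] g) (hgi : Integrable g μ)
    (h : ∀ B, MeasurableSet B → ∫ ω in W ⁻¹' B, g ω ∂μ = μ.real (W ⁻¹' B ∩ V ⁻¹' A)) :
    g =ᵐ[μ] condProb μ W V A := by
  refine ae_eq_condExp_of_forall_setIntegral_eq hW.comap_le
    (integrable_indicator_one_comp hV hA) (fun _ _ _ => hgi.integrableOn) ?_
    hg.aestronglyMeasurable
  rintro _ ⟨B, hB, rfl⟩ -
  rw [h B hB, setIntegral_indicator_one_comp hV hA _]

lemma map_prod_eq_iff_measureReal_inter_eq (hW : Measurable W) (hV : Measurable V)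
    (hW' : Measurable W') (hV' : Measurable V') :
    μ.map (fun ω => (W ω, V ω)) = μ.map (fun ω => (W' ω, V' ω)) ↔
      ∀ B A, MeasurableSet B → MeasurableSet A →
        μ.real (W ⁻¹' B ∩ V ⁻¹' A) = μ.real (W' ⁻¹' B ∩ V' ⁻¹' A) := by
  rw [Measure.ext_prod_iff]
  refine forall₂_congr fun B A => forall₂_congr fun hB hA => ?_
  rw [Measure.map_apply (hW.prodMk hV) (hB.prod hA),
    Measure.map_apply (hW'.prodMk hV') (hB.prod hA), Set.mk_preimage_prod, Set.mk_preimage_prod,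
    measureReal_eq_measureReal_iff]

lemma condProb_ae_eq_iff_map_prod_eq (hW : Measurable W) (hV : Measurable V)
    (hV' : Measurable V') :
    (∀ A, MeasurableSet A → condProb μ W V A =ᵐ[μ] condProb μ W V' A) ↔
      μ.map (fun ω => (W ω, V ω)) = μ.map (fun ω => (W ω, V' ω)) := by
  rw [map_prod_eq_iff_measureReal_inter_eq hW hV hW hV']
  refine ⟨fun h B A hB hA => ?_, fun h A hA => ?_⟩
  · rw [← setIntegral_condProb hW hV hA hB, ← setIntegral_condProb hW hV' hA hB]
    exact setIntegral_congr_ae (hW hB) ((h A hA).mono fun _ hω _ => hω)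
  · refine ae_eq_condProb_of_setIntegral_eq hW hV' hA stronglyMeasurable_condExp
      integrable_condExp fun B hB => ?_
    rw [setIntegral_condProb hW hV hA hB, h B A hB hA]

lemma condProb_ae_eq_comp_of_map_prod_eq (hW : Measurable W) (hV : Measurable V)
    (hW' : Measurable W') (hV' : Measurable V')
    (h : μ.map (fun ω => (W ω, V ω)) = μ.map (fun ω => (W' ω, V' ω)))
    {k : β → ℝ} (hk : Measurable k) (hA : MeasurableSet A)
    (hcond : condProb μ W V A =ᵐ[μ] k ∘ W) :
    condProb μ W' V' A =ᵐ[μ] k ∘ W' := by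
  have hlaw : μ.map W = μ.map W' := by
    have := congrArg (Measure.map Prod.fst) h
    rwa [Measure.map_map measurable_fst (hW.prodMk hV),
      Measure.map_map measurable_fst (hW'.prodMk hV')] at this
  have hint : Integrable (k ∘ W') μ := by
    rw [← integrable_map_measure hk.aestronglyMeasurable hW'.aemeasurable, ← hlaw,
      integrable_map_measure hk.aestronglyMeasurable hW.aemeasurable]
    exact integrable_condExp.congr hcond
  refine (ae_eq_condProb_of_setIntegral_eq hW' hV' hA
    (hk.comp (comap_measurable W')).stronglyMeasurable hint fun B hB => ?_).symm
  calc ∫ ω in W' ⁻¹' B, k (W' ω) ∂μ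
      = ∫ ω in W ⁻¹' B, k (W ω) ∂μ := (setIntegral_comp_eq_of_map_eq hW hW' hlaw hk hB).symm
    _ = ∫ ω in W ⁻¹' B, condProb μ W V A ω ∂μ :=
      setIntegral_congr_ae (hW hB) (hcond.mono fun _ hω _ => hω.symm)
    _ = μ.real (W' ⁻¹' B ∩ V' ⁻¹' A) := by
      rw [setIntegral_condProb hW hV hA hB,
        (map_prod_eq_iff_measureReal_inter_eq hW hV hW' hV').1 h B A hB hA]

lemma map_prod_eq_of_condProb_ae_eq_comp (hW : Measurable W) (hV : Measurable V)
    (hW' : Measurable W') (hV' : Measurable V') (hlaw : μ.map W = μ.map W')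
    (hk : ∀ A, MeasurableSet A → ∃ k : β → ℝ, Measurable k ∧
      condProb μ W V A =ᵐ[μ] k ∘ W ∧ condProb μ W' V' A =ᵐ[μ] k ∘ W') :
    μ.map (fun ω => (W ω, V ω)) = μ.map (fun ω => (W' ω, V' ω)) := by
  refine (map_prod_eq_iff_measureReal_inter_eq hW hV hW' hV').2 fun B A hB hA => ?_
  obtain ⟨k, hk, hkW, hkW'⟩ := hk A hA
  rw [← setIntegral_condProb hW hV hA hB, ← setIntegral_condProb hW' hV' hA hB,
    setIntegral_congr_ae (hW hB) (hkW.mono fun _ hω _ => hω),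
    setIntegral_congr_ae (hW' hB) (hkW'.mono fun _ hω _ => hω)]
  exact setIntegral_comp_eq_of_map_eq hW hW' hlaw hk hB

variable [MeasurableSpace δ]

lemma aestronglyMeasurable_condProb_of_map_prod_eq {ι : Type*} [Countable ι] {τ : ι → β → β}
    (hW : Measurable W) (hV : Measurable V) (hτ : ∀ i, Measurable (τ i))
    (hinv : ∀ i, Involutive (τ i))
    (hlaw : ∀ i, μ.map (fun ω => (τ i (W ω), V ω)) = μ.map (fun ω => (W ω, V ω)))
    {π : β → δ} {σ : δ → β} (hσ : Measurable σ) (hπσ : ∀ w, ∃ i, σ (π w) = τ i w)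
    (hA : MeasurableSet A) :
    AEStronglyMeasurable[MeasurableSpace.comap (fun ω => π (W ω)) inferInstance]
      (condProb μ W V A) μ := by
  obtain ⟨h, hh, hfac⟩ :=
    (stronglyMeasurable_condExp (μ := μ) (m := MeasurableSpace.comap W inferInstance)
      (f := fun ω => A.indicator (fun _ => (1 : ℝ)) (V ω))).exists_eq_measurable_comp
  have hinvar : ∀ᵐ ω ∂μ, ∀ i, h (τ i (W ω)) = h (W ω) := by
    refine ae_all_iff.2 fun i => ?_
    have hcomp := condProb_ae_eq_comp_of_map_prod_eq (W' := fun ω => τ i (W ω)) hW hV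
      ((hτ i).comp hW) hV (hlaw i).symm hh.measurable hA (Filter.EventuallyEq.of_eq hfac)
    rw [condProb_comp_of_involutive (hτ i) (hinv i)] at hcomp
    filter_upwards [hcomp] with ω hω
    exact hω.symm.trans (congrFun hfac ω)
  refine ⟨fun ω => h (σ (π (W ω))),
    (hh.comp_measurable hσ).comp_measurable (comap_measurable _), ?_⟩
  filter_upwards [hinvar] with ω hω
  obtain ⟨i, hi⟩ := hπσ (W ω)
  rw [hi, hω i]
  exact congrFun hfac ω

lemma map_prod_eq_of_aestronglyMeasurable_condProb {τ : β → β} (hW : Measurable W)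
    (hV : Measurable V) (hτ : Measurable τ) (hinv : Involutive τ)
    (hlaw : μ.map (fun ω => τ (W ω)) = μ.map W)
    {π : β → δ} (hπ : Measurable π) (hπτ : ∀ w, π (τ w) = π w)
    (hsym : ∀ A, MeasurableSet A →
      AEStronglyMeasurable[MeasurableSpace.comap (fun ω => π (W ω)) inferInstance]
        (condProb μ W V A) μ) :
    μ.map (fun ω => (τ (W ω), V ω)) = μ.map (fun ω => (W ω, V ω)) := by
  refine map_prod_eq_of_condProb_ae_eq_comp (W := fun ω => τ (W ω)) (hτ.comp hW) hV hW hV hlaw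
    fun A hA => ?_
  obtain ⟨g, hg, hae⟩ := (hsym A hA).exists_ae_eq_measurable_comp
  refine ⟨g ∘ π, hg.comp hπ, ?_, hae⟩
  rw [condProb_comp_of_involutive hτ hinv]
  filter_upwards [hae] with ω hω
  simp only [hω, Function.comp_apply, hπτ]

end ConditionalProbability

namespace Knockoff

open Function

variable {p : ℕ}

abbrev Config (p : ℕ) := (Fin p → ℝ) × (Fin p → ℝ)

abbrev CondSpace (j : Fin p) := ({i : Fin p // i ≠ j} → ℝ) × ({i : Fin p // i < j} → ℝ)

abbrev SymSpace (j : Fin p) := ({i : Fin p // j < i} → ℝ) × ({i : Fin p // i < j} → ℝ × ℝ)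

def condVec (j : Fin p) (z : Config p) : CondSpace j := (fun i => z.1 i, fun i => z.2 i)

def coordPair (j : Fin p) (z : Config p) : ℝ × ℝ := (z.1 j, z.2 j)

noncomputable def unorderedPairs (j : Fin p) (w : CondSpace j) : SymSpace j :=
  (fun i => w.1 ⟨i, i.2.ne'⟩,
   fun i => (min (w.1 ⟨i, i.2.ne⟩) (w.2 i), max (w.1 ⟨i, i.2.ne⟩) (w.2 i)))

def swapBelow (j : Fin p) (S : Finset (Fin p)) (w : CondSpace j) : CondSpace j :=
  (fun i => if h : i.1 ∈ S ∧ i.1 < j then w.2 ⟨i, h.2⟩ else w.1 i,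
   fun i => if i.1 ∈ S then w.1 ⟨i, i.2.ne⟩ else w.2 i)

noncomputable def flipSet (j : Fin p) (w : CondSpace j) : Finset (Fin p) :=
  open Classical in {k | ∃ hk : k < j, w.2 ⟨k, hk⟩ < w.1 ⟨k, hk.ne⟩}

def sortPairs (j : Fin p) (s : SymSpace j) : CondSpace j :=
  (fun i => if h : i.1 < j then (s.2 ⟨i, h⟩).1 else s.1 ⟨i, (not_lt.1 h).lt_of_ne' i.2⟩,
   fun i => (s.2 i).2)

def swapSet (S : Finset (Fin p)) (z : Config p) : Config p :=
  (fun i => if i ∈ S then z.2 i else z.1 i, fun i => if i ∈ S then z.1 i else z.2 i)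

/-- Encodes `(x, x̃_{1:n})`, with `0` in the knockoff slots that are hidden. -/
def maskBelow (n : ℕ) (z : Config p) : Config p :=
  (z.1, fun i => if (i : ℕ) < n then z.2 i else 0)

def assemble (m : Fin p) (wv : CondSpace m × (ℝ × ℝ)) : Config p :=
  (fun i => if h : i = m then wv.2.1 else wv.1.1 ⟨i, h⟩,
   fun i => if h : i < m then wv.1.2 ⟨i, h⟩ else if i = m then wv.2.2 else 0)

@[fun_prop]
lemma measurable_condVec (j : Fin p) : Measurable (condVec j) := by
  unfold condVec; fun_prop

@[fun_prop]
lemma measurable_coordPair (j : Fin p) : Measurable (coordPair (p := p) j) := by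
  unfold coordPair; fun_prop
@[fun_prop]
lemma measurable_unorderedPairs (j : Fin p) : Measurable (unorderedPairs j) := by
  unfold unorderedPairs; fun_prop
@[fun_prop]
lemma measurable_swapBelow (j : Fin p) (S : Finset (Fin p)) : Measurable (swapBelow j S) := by
  unfold swapBelow; fun_prop
@[fun_prop]
lemma measurable_sortPairs (j : Fin p) : Measurable (sortPairs j) := by
  unfold sortPairs; fun_prop
@[fun_prop]
lemma measurable_swapSet (S : Finset (Fin p)) : Measurable (swapSet S) := by
  unfold swapSet; fun_prop
@[fun_prop]
lemma measurable_maskBelow (n : ℕ) : Measurable (maskBelow (p := p) n) := by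
  unfold maskBelow; fun_prop
@[fun_prop]
lemma measurable_assemble (m : Fin p) : Measurable (assemble m) := by
  unfold assemble; fun_prop
@[fun_prop]
lemma measurable_swapPair (j : Fin p) : Measurable (swapPair j) := by
  unfold swapPair; fun_prop

lemma swapSet_empty : swapSet (∅ : Finset (Fin p)) = id := rfl

lemma swapSet_insert {k : Fin p} {S : Finset (Fin p)} (hk : k ∉ S) :
    swapSet (insert k S) = swapPair k ∘ swapSet S := by
  funext z
  refine Prod.ext (funext fun i => ?_) (funext fun i => ?_) <;>
    rcases eq_or_ne i k with rfl | hik <;> simp [swapSet, swapPair, *]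

lemma swapSet_singleton (j : Fin p) : swapSet {j} = swapPair j := by
  simpa [swapSet_empty] using swapSet_insert (Finset.notMem_empty j)

lemma condVec_swapSet {j : Fin p} {S : Finset (Fin p)} (hS : ∀ k ∈ S, k < j) (z : Config p) :
    condVec j (swapSet S z) = swapBelow j S (condVec j z) := by
  refine Prod.ext (funext fun i => ?_) (funext fun i => ?_) <;> by_cases h : i.1 ∈ S
  all_goals simp_all [condVec, swapSet, swapBelow]

lemma coordPair_swapSet {j : Fin p} {S : Finset (Fin p)} (hj : j ∉ S) (z : Config p) :
    coordPair j (swapSet S z) = coordPair j z := by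
  simp [coordPair, swapSet, hj]

lemma condVec_swapPair (j : Fin p) (z : Config p) : condVec j (swapPair j z) = condVec j z :=
  Prod.ext (funext fun i => update_of_ne i.2 _ _) (funext fun i => update_of_ne i.2.ne _ _)

lemma coordPair_swapPair (j : Fin p) (z : Config p) :
    coordPair j (swapPair j z) = (coordPair j z).swap := by
  simp [coordPair, swapPair]

lemma swapBelow_involutive (j : Fin p) (S : Finset (Fin p)) : Involutive (swapBelow j S) := by
  intro w
  refine Prod.ext (funext fun i => ?_) (funext fun i => ?_)
  · by_cases h : i.1 ∈ S ∧ i.1 < j <;> simp [swapBelow, h]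
  · by_cases h : i.1 ∈ S <;> simp [swapBelow, h, i.2]

lemma unorderedPairs_swapBelow (j : Fin p) (S : Finset (Fin p)) (w : CondSpace j) :
    unorderedPairs j (swapBelow j S w) = unorderedPairs j w := by
  refine Prod.ext (funext fun i => ?_) (funext fun i => ?_)
  · simp [unorderedPairs, swapBelow, i.2.not_gt]
  · by_cases h : i.1 ∈ S <;> simp [unorderedPairs, swapBelow, h, i.2, min_comm, max_comm]

lemma lt_of_mem_flipSet {j k : Fin p} {w : CondSpace j} (hk : k ∈ flipSet j w) : k < j := by
  obtain ⟨h, -⟩ := (Finset.mem_filter.1 hk).2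
  exact h

lemma sortPairs_unorderedPairs (j : Fin p) (w : CondSpace j) :
    sortPairs j (unorderedPairs j w) = swapBelow j (flipSet j w) w := by
  refine Prod.ext (funext fun i => ?_) (funext fun i => ?_)
  · by_cases h : i.1 < j
    · by_cases hlt : w.2 ⟨i, h⟩ < w.1 ⟨i, h.ne⟩
      · simp [sortPairs, unorderedPairs, swapBelow, flipSet, h, hlt, hlt.le]
      · simp [sortPairs, unorderedPairs, swapBelow, flipSet, h, hlt, not_lt.1 hlt]
    · simp [sortPairs, unorderedPairs, swapBelow, h]
  · by_cases hlt : w.2 i < w.1 ⟨i, i.2.ne⟩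
    · simp [sortPairs, unorderedPairs, swapBelow, flipSet, i.2, hlt, hlt.le]
    · simp [sortPairs, unorderedPairs, swapBelow, flipSet, i.2, hlt, not_lt.1 hlt]

lemma assemble_condVec_coordPair (m : Fin p) (z : Config p) :
    assemble m (condVec m z, coordPair m z) = maskBelow (m + 1) z := by
  refine Prod.ext (funext fun i => ?_) (funext fun i => ?_)
  · by_cases h : i = m <;> simp [assemble, condVec, coordPair, maskBelow, h]
  · rcases lt_trichotomy i m with h | rfl | h
    · simp [assemble, condVec, maskBelow, h, h.not_gt]
    · simp [assemble, coordPair, maskBelow]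
    · simp [assemble, maskBelow, h.not_gt, h.ne', h.not_ge]

lemma swapPair_assemble (m : Fin p) (w : CondSpace m) (v : ℝ × ℝ) :
    swapPair m (assemble m (w, v)) = assemble m (w, v.swap) := by
  refine Prod.ext (funext fun i => ?_) (funext fun i => ?_) <;>
    by_cases h : i = m <;> simp [assemble, swapPair, h]

lemma swapSet_assemble {m : Fin p} {S : Finset (Fin p)} (hS : ∀ k ∈ S, k < m) (w : CondSpace m)
    (v : ℝ × ℝ) : swapSet S (assemble m (w, v)) = assemble m (swapBelow m S w, v) := by
  have hm : m ∉ S := fun hm => lt_irrefl m (hS m hm)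
  refine Prod.ext (funext fun i => ?_) (funext fun i => ?_)
  · by_cases h : i ∈ S
    · simp [assemble, swapSet, swapBelow, h, hS i h, (hS i h).ne]
    · by_cases him : i = m <;> simp [assemble, swapSet, swapBelow, h, him, hm]
  · by_cases h : i ∈ S
    · simp [assemble, swapSet, swapBelow, h, hS i h, (hS i h).ne]
    · by_cases him : i < m <;> simp [assemble, swapSet, swapBelow, h, him]

lemma condVec_maskBelow (m : Fin p) (z : Config p) : condVec m (maskBelow m z) = condVec m z :=
  Prod.ext rfl (funext fun i => if_pos i.2)

lemma maskBelow_of_le {n : ℕ} (hn : p ≤ n) (z : Config p) : maskBelow n z = z :=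
  Prod.ext rfl (funext fun i => if_pos (i.2.trans_le hn))

lemma map_swapSet_eq_self {ν : Measure (Config p)} (h : ∀ k, ν.map (swapPair k) = ν)
    (S : Finset (Fin p)) : ν.map (swapSet S) = ν := by
  classical
  induction S using Finset.induction_on with
  | empty => rw [swapSet_empty, Measure.map_id]
  | insert k S hk ih =>
    rw [swapSet_insert hk, ← Measure.map_map (measurable_swapPair k) (measurable_swapSet S), ih,
      h k]

variable {Ω : Type*} [MeasurableSpace Ω] {μ : Measure Ω} {Z : Ω → Config p}

lemma map_maskBelow_succ_of_semiconj (hZ : Measurable Z) {j m : Fin p}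
    {ρ : CondSpace m × (ℝ × ℝ) → CondSpace m × (ℝ × ℝ)} (hρ : Measurable ρ)
    (hinv : (μ.map (fun ω => (condVec m (Z ω), coordPair m (Z ω)))).map ρ =
      μ.map (fun ω => (condVec m (Z ω), coordPair m (Z ω))))
    (h : Semiconj (assemble m) ρ (swapPair j)) :
    (μ.map (fun ω => maskBelow ((m : ℕ) + 1) (Z ω))).map (swapPair j) =
      μ.map (fun ω => maskBelow ((m : ℕ) + 1) (Z ω)) := by
  have hlaw := map_map_eq_of_semiconj (by fun_prop) (measurable_assemble m) hρ
    (measurable_swapPair j) hinv h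
  simpa only [assemble_condVec_coordPair] using hlaw

variable [IsFiniteMeasure μ] {A : Set (ℝ × ℝ)}

lemma condProb_coordPair_ae_eq_swap (hZ : Measurable Z) {j : Fin p}
    (hswap : (μ.map Z).map (swapPair j) = μ.map Z) (hA : MeasurableSet A) :
    condProb μ (fun ω => condVec j (Z ω)) (fun ω => coordPair j (Z ω)) A =ᵐ[μ]
      condProb μ (fun ω => condVec j (Z ω)) (fun ω => (coordPair j (Z ω)).swap) A := by
  have hW : Measurable fun ω => condVec j (Z ω) := by fun_prop
  have hV : Measurable fun ω => coordPair j (Z ω) := by fun_prop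
  refine (condProb_ae_eq_iff_map_prod_eq hW hV (measurable_swap.comp hV)).2 ?_ A hA
  have hlaw := map_map_eq_of_semiconj (f := fun z => (condVec j z, coordPair j z))
    (g := fun wv => (wv.1, wv.2.swap)) hZ (by fun_prop) (measurable_swapPair j) (by fun_prop)
    hswap fun z => by simp only [condVec_swapPair, coordPair_swapPair]
  rw [Measure.map_map (by fun_prop) (hW.prodMk hV)] at hlaw
  exact hlaw.symm

lemma aestronglyMeasurable_condProb_unorderedPairs (hZ : Measurable Z)
    (hswap : ∀ k, (μ.map Z).map (swapPair k) = μ.map Z) (j : Fin p) (hA : MeasurableSet A) :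
    AEStronglyMeasurable[MeasurableSpace.comap
        (fun ω => unorderedPairs j (condVec j (Z ω))) inferInstance]
      (condProb μ (fun ω => condVec j (Z ω)) (fun ω => coordPair j (Z ω)) A) μ := by
  have hW : Measurable fun ω => condVec j (Z ω) := by fun_prop
  have hV : Measurable fun ω => coordPair j (Z ω) := by fun_prop
  refine aestronglyMeasurable_condProb_of_map_prod_eq
    (τ := fun S : {S : Finset (Fin p) // ∀ k ∈ S, k < j} => swapBelow j S.1) hW hV
    (fun S => measurable_swapBelow j S.1) (fun S => swapBelow_involutive j S.1) (fun S => ?_)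
    (measurable_sortPairs j)
    (fun w => ⟨⟨flipSet j w, fun _ => lt_of_mem_flipSet⟩, sortPairs_unorderedPairs j w⟩) hA
  have hjS : j ∉ S.1 := fun hj => lt_irrefl j (S.2 j hj)
  have hlaw := map_map_eq_of_semiconj (f := fun z => (condVec j z, coordPair j z))
    (g := fun wv => (swapBelow j S.1 wv.1, wv.2)) hZ (by fun_prop) (measurable_swapSet S.1)
    (by fun_prop) (map_swapSet_eq_self hswap S.1)
    fun z => by simp only [condVec_swapSet S.2, coordPair_swapSet hjS]
  rwa [Measure.map_map (by fun_prop) (hW.prodMk hV)] at hlaw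

lemma map_maskBelow_succ_self (hZ : Measurable Z) {j : Fin p}
    (hexch : ∀ A, MeasurableSet A →
      condProb μ (fun ω => condVec j (Z ω)) (fun ω => coordPair j (Z ω)) A =ᵐ[μ]
        condProb μ (fun ω => condVec j (Z ω)) (fun ω => (coordPair j (Z ω)).swap) A) :
    (μ.map (fun ω => maskBelow ((j : ℕ) + 1) (Z ω))).map (swapPair j) =
      μ.map (fun ω => maskBelow ((j : ℕ) + 1) (Z ω)) := by
  have hW : Measurable fun ω => condVec j (Z ω) := by fun_prop
  have hV : Measurable fun ω => coordPair j (Z ω) := by fun_prop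
  refine map_maskBelow_succ_of_semiconj hZ (ρ := fun wv => (wv.1, wv.2.swap)) (by fun_prop) ?_
    fun wv => (swapPair_assemble j wv.1 wv.2).symm
  rw [Measure.map_map (by fun_prop) (hW.prodMk hV)]
  exact ((condProb_ae_eq_iff_map_prod_eq hW hV (measurable_swap.comp hV)).1 hexch).symm

lemma map_maskBelow_succ_of_lt (hZ : Measurable Z) {j m : Fin p} (hjm : j < m)
    (ih : (μ.map (fun ω => maskBelow m (Z ω))).map (swapPair j) =
      μ.map (fun ω => maskBelow m (Z ω)))
    (hsym : ∀ A, MeasurableSet A →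
      AEStronglyMeasurable[MeasurableSpace.comap
          (fun ω => unorderedPairs m (condVec m (Z ω))) inferInstance]
        (condProb μ (fun ω => condVec m (Z ω)) (fun ω => coordPair m (Z ω)) A) μ) :
    (μ.map (fun ω => maskBelow ((m : ℕ) + 1) (Z ω))).map (swapPair j) =
      μ.map (fun ω => maskBelow ((m : ℕ) + 1) (Z ω)) := by
  have hW : Measurable fun ω => condVec m (Z ω) := by fun_prop
  have hV : Measurable fun ω => coordPair m (Z ω) := by fun_prop
  have hS : ∀ k ∈ ({j} : Finset (Fin p)), k < m := by simpa using hjm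
  have hlawW : μ.map (fun ω => swapBelow m {j} (condVec m (Z ω))) =
      μ.map (fun ω => condVec m (Z ω)) := by
    have hlaw := map_map_eq_of_semiconj (by fun_prop) (measurable_condVec m)
      (measurable_swapPair j) (measurable_swapBelow m {j}) ih
      fun z => by rw [← swapSet_singleton, condVec_swapSet hS]
    simp only [condVec_maskBelow] at hlaw
    rwa [Measure.map_map (measurable_swapBelow m {j}) hW] at hlaw
  refine map_maskBelow_succ_of_semiconj hZ (ρ := fun wv => (swapBelow m {j} wv.1, wv.2))
    (by fun_prop) ?_ fun wv => ?_
  · rw [Measure.map_map (by fun_prop) (hW.prodMk hV)]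
    exact map_prod_eq_of_aestronglyMeasurable_condProb hW hV (measurable_swapBelow m {j})
      (swapBelow_involutive m {j}) hlawW (measurable_unorderedPairs m)
      (unorderedPairs_swapBelow m {j}) hsym
  · rw [← swapSet_singleton]
    exact (swapSet_assemble hS wv.1 wv.2).symm

lemma map_swapPair_eq_of_condProb (hZ : Measurable Z) (j : Fin p)
    (hexch : ∀ A, MeasurableSet A →
      condProb μ (fun ω => condVec j (Z ω)) (fun ω => coordPair j (Z ω)) A =ᵐ[μ]
        condProb μ (fun ω => condVec j (Z ω)) (fun ω => (coordPair j (Z ω)).swap) A)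
    (hsym : ∀ m : Fin p, ∀ A, MeasurableSet A →
      AEStronglyMeasurable[MeasurableSpace.comap
          (fun ω => unorderedPairs m (condVec m (Z ω))) inferInstance]
        (condProb μ (fun ω => condVec m (Z ω)) (fun ω => coordPair m (Z ω)) A) μ) :
    (μ.map Z).map (swapPair j) = μ.map Z := by
  have hmask : ∀ n, (j : ℕ) + 1 ≤ n → n ≤ p →
      (μ.map (fun ω => maskBelow n (Z ω))).map (swapPair j) =
        μ.map (fun ω => maskBelow n (Z ω)) := by
    intro n hn
    induction n, hn using Nat.le_induction with
    | base => exact fun _ => map_maskBelow_succ_self hZ hexch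
    | succ n hjn ih =>
      exact fun hnp => map_maskBelow_succ_of_lt hZ (m := ⟨n, hnp⟩) hjn
        (ih ((Nat.le_succ n).trans hnp)) (hsym _)
  simpa only [maskBelow_of_le le_rfl] using hmask p j.2 le_rfl

end Knockoff

/-- **Sequential characterization of knockoff distributions.**
Pairwise exchangeability of `(X, X̃)` holds if and only if, for every `j`:
(1) conditional exchangeability of `(X_j, X̃_j)` given `(X₋ⱼ, X̃_{1:(j-1)})`, and
(2) knockoff symmetry: the conditional probability of `(X_j, X̃_j) ∈ A` given
`(X₋ⱼ, X̃_{1:(j-1)})` is (a.e.) measurable with respect to the σ-algebra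
generated by `X_{(j+1):p}` and the unordered pairs `{X_k, X̃_k}`, `k < j`. -/
theorem stmt4 {p : ℕ} (μ : Measure Ω) [IsProbabilityMeasure μ]
    (X Xt : Ω → Fin p → ℝ) (hX : Measurable X) (hXt : Measurable Xt) :
    (∀ j : Fin p,
      (μ.map (fun ω => (X ω, Xt ω))).map (swapPair j) =
        μ.map (fun ω => (X ω, Xt ω))) ↔
    ((∀ j : Fin p, ∀ A : Set (ℝ × ℝ), MeasurableSet A →
        (μ[(fun ω => A.indicator (fun _ => (1 : ℝ)) (X ω j, Xt ω j)) |
            condAlg X Xt j]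
          =ᵐ[μ]
         μ[(fun ω => A.indicator (fun _ => (1 : ℝ)) (Xt ω j, X ω j)) |
            condAlg X Xt j])) ∧
     (∀ j : Fin p, ∀ A : Set (ℝ × ℝ), MeasurableSet A →
        AEStronglyMeasurable[symAlg X Xt j]
          (μ[(fun ω => A.indicator (fun _ => (1 : ℝ)) (X ω j, Xt ω j)) |
              condAlg X Xt j]) μ)) := by
  have hZ : Measurable fun ω => (X ω, Xt ω) := hX.prodMk hXt
  constructor
  · intro hswap
    exact ⟨fun j A hA => Knockoff.condProb_coordPair_ae_eq_swap hZ (hswap j) hA,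
      fun j A hA => Knockoff.aestronglyMeasurable_condProb_unorderedPairs hZ hswap j hA⟩
  · rintro ⟨hexch, hsym⟩ j
    exact Knockoff.map_swapPair_eq_of_condProb hZ j (hexch j) hsym
end

section
/- With variables ordered by the junction-tree leaf-elimination algorithm, define V̄_j = {1,...,j−1} ∪ V_j where V_j is the active junction-tree node when j is appended. Then for any j > ℓ with j ∈ V̄_ℓ, one has V̄_ℓ ⊆ V̄_j. -/
open Finset

/-- A junction tree for a graph `G` on `Fin p`, together with the data of a run
of the leaf-elimination ordering algorithm (Algorithm 2 of the paper). -/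
structure JTOrder (p n : ℕ) (G : SimpleGraph (Fin p)) where
  T : SimpleGraph (Fin n)
  isTree : T.IsTree
  B : Fin n → Finset (Fin p)
  covers : ∀ j : Fin p, ∃ v, j ∈ B v
  edgeCover : ∀ j k : Fin p, G.Adj j k → ∃ v, j ∈ B v ∧ k ∈ B v
  rip : ∀ (u v : Fin n) (j : Fin p), j ∈ B u → j ∈ B v →
    ∀ w : T.Walk u v, w.IsPath → ∀ x ∈ w.support, j ∈ B x
  ρ : Equiv.Perm (Fin n)
  leaf : ∀ k : Fin n, Set.Subsingleton {l : Fin n | k < l ∧ T.Adj (ρ k) (ρ l)}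
  stage : Fin p → Fin n
  stageMono : Monotone stage
  mem_active : ∀ j : Fin p, j ∈ B (ρ (stage j))
  not_in_neighbor : ∀ (j : Fin p) (l : Fin n), stage j < l →
    T.Adj (ρ (stage j)) (ρ l) → j ∉ B (ρ l)
  in_neighbor_of_lt : ∀ (j : Fin p) (k : Fin n), k < stage j → j ∈ B (ρ k) →
    ∃ l, k < l ∧ T.Adj (ρ k) (ρ l) ∧ j ∈ B (ρ l)

/-- `V̄_j = {1, …, j−1} ∪ V_j`, where `V_j` is the active junction-tree node
when variable `j` is appended. -/
def JTOrder.Vbar {p n : ℕ} {G : SimpleGraph (Fin p)} (jt : JTOrder p n G)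
    (j : Fin p) : Finset (Fin p) :=
  (Finset.univ.filter (fun i => i < j)) ∪ jt.B (jt.ρ (jt.stage j))

namespace JTOrder

variable {p n : ℕ} {G : SimpleGraph (Fin p)} (jt : JTOrder p n G)

/-- One cannot enter "from above" a path ending at `ρ (stage i)` all of whose
nodes contain `i`, with the entering node also containing `i`. -/
lemma no_enter_from_above (i : Fin p) :
    ∀ (v t : Fin n) (w : jt.T.Walk v t), t = jt.ρ (jt.stage i) →
      w.IsPath → (∀ x ∈ w.support, i ∈ jt.B x) →
      ∀ d : Fin n, jt.T.Adj (jt.ρ d) v → jt.ρ.symm v < d → i ∈ jt.B (jt.ρ d) →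
      jt.ρ d ∉ w.support → False := by
  intro v t w
  induction w with
  | @nil u =>
    intro ht _ _ d hadj hltd hd _
    subst ht
    have hsm : jt.ρ.symm (jt.ρ (jt.stage i)) = jt.stage i := Equiv.symm_apply_apply _ _
    rw [hsm] at hltd
    exact jt.not_in_neighbor i d hltd hadj.symm hd
  | @cons v v' _ h w' ih =>
    intro ht hpath hsupp d hadj hltd hd hdns
    rw [SimpleGraph.Walk.cons_isPath_iff] at hpath
    obtain ⟨hp', hvns⟩ := hpath
    have hvv : jt.ρ (jt.ρ.symm v) = v := Equiv.apply_symm_apply _ _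
    have hvv' : jt.ρ (jt.ρ.symm v') = v' := Equiv.apply_symm_apply _ _
    have hne : jt.ρ.symm v' ≠ jt.ρ.symm v := by
      intro e
      exact h.ne (by rw [← hvv, ← hvv', e])
    have hnlt : ¬ jt.ρ.symm v < jt.ρ.symm v' := by
      intro hac
      have h1 : jt.ρ.symm v' ∈
          {l : Fin n | jt.ρ.symm v < l ∧ jt.T.Adj (jt.ρ (jt.ρ.symm v)) (jt.ρ l)} := by
        refine ⟨hac, ?_⟩
        rw [hvv, hvv']
        exact h
      have h2 : d ∈
          {l : Fin n | jt.ρ.symm v < l ∧ jt.T.Adj (jt.ρ (jt.ρ.symm v)) (jt.ρ l)} := by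
        refine ⟨hltd, ?_⟩
        rw [hvv]
        exact hadj.symm
      have heq : jt.ρ.symm v' = d := jt.leaf (jt.ρ.symm v) h1 h2
      apply hdns
      rw [SimpleGraph.Walk.support_cons]
      right
      rw [← heq, hvv']
      exact w'.start_mem_support
    have hlt' : jt.ρ.symm v' < jt.ρ.symm v := lt_of_le_of_ne (le_of_not_gt hnlt) hne
    apply ih ht hp'
      (fun x hx => hsupp x (by rw [SimpleGraph.Walk.support_cons]; right; exact hx))
      (jt.ρ.symm v) (by rw [hvv]; exact h) hlt'
      (by rw [hvv]; exact hsupp v (SimpleGraph.Walk.cons h w').start_mem_support)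
      (by rw [hvv]; exact hvns)

/-- Any junction-tree node containing `i` has index at most `stage i`. -/
lemma le_stage_of_mem (i : Fin p) (m : Fin n) (him : i ∈ jt.B (jt.ρ m)) :
    m ≤ jt.stage i := by
  classical
  set S : Finset (Fin n) := Finset.univ.filter (fun c => i ∈ jt.B (jt.ρ c)) with hS
  have hmS : m ∈ S := Finset.mem_filter.mpr ⟨Finset.mem_univ _, him⟩
  have hSne : S.Nonempty := ⟨m, hmS⟩
  set M := S.max' hSne with hM
  have hMS : M ∈ S := S.max'_mem hSne
  have hMB : i ∈ jt.B (jt.ρ M) := (Finset.mem_filter.mp hMS).2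
  have hstS : jt.stage i ∈ S := Finset.mem_filter.mpr ⟨Finset.mem_univ _, jt.mem_active i⟩
  have hstM : jt.stage i ≤ M := S.le_max' _ hstS
  have hmM : m ≤ M := S.le_max' _ hmS
  rcases eq_or_lt_of_le hstM with he | hlt
  · rw [← he] at hmM; exact hmM
  · exfalso
    have hne : jt.ρ M ≠ jt.ρ (jt.stage i) := by
      intro e
      exact absurd (jt.ρ.injective e) (ne_of_gt hlt)
    obtain ⟨w0⟩ := jt.isTree.isConnected.preconnected (jt.ρ M) (jt.ρ (jt.stage i))
    obtain ⟨w, hw⟩ := w0.toPath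
    have hsupp : ∀ x ∈ w.support, i ∈ jt.B x :=
      jt.rip (jt.ρ M) (jt.ρ (jt.stage i)) i hMB (jt.mem_active i) w hw
    obtain ⟨x, hx, w', hw'⟩ := SimpleGraph.Walk.exists_eq_cons_of_ne hne w
    subst hw'
    rw [SimpleGraph.Walk.cons_isPath_iff] at hw
    obtain ⟨hp', hMns⟩ := hw
    have hxx : jt.ρ (jt.ρ.symm x) = x := Equiv.apply_symm_apply _ _
    have hxB : i ∈ jt.B x := hsupp x
      (by rw [SimpleGraph.Walk.support_cons]; exact List.mem_cons_of_mem _ w'.start_mem_support)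
    have hxS : jt.ρ.symm x ∈ S := Finset.mem_filter.mpr ⟨Finset.mem_univ _, by rwa [hxx]⟩
    have hxM : jt.ρ.symm x ≤ M := S.le_max' _ hxS
    have hxneM : jt.ρ.symm x ≠ M := by
      intro e
      exact hx.ne' (by rw [← hxx, e])
    have hxltM : jt.ρ.symm x < M := lt_of_le_of_ne hxM hxneM
    refine jt.no_enter_from_above i x _ w' rfl hp'
      (fun y hy => hsupp y (by rw [SimpleGraph.Walk.support_cons]; exact List.mem_cons_of_mem _ hy))
      M hx hxltM hMB hMns

/-- Climbing the parent chain: if `i` and `x` both belong to node `k` and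
`stage i ≤ stage x`, then `x` belongs to the node active when `i` is appended. -/
lemma chain (i x : Fin p) :
    ∀ (N : ℕ) (k : Fin n), (jt.stage i : ℕ) - (k : ℕ) ≤ N →
      i ∈ jt.B (jt.ρ k) → x ∈ jt.B (jt.ρ k) → jt.stage i ≤ jt.stage x →
      x ∈ jt.B (jt.ρ (jt.stage i)) := by
  intro N
  induction N with
  | zero =>
    intro k hN hik hxk _
    have hk : k ≤ jt.stage i := jt.le_stage_of_mem i k hik
    have hk' : (k : ℕ) ≤ (jt.stage i : ℕ) := hk
    have : k = jt.stage i := by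
      apply Fin.ext
      omega
    rwa [← this]
  | succ N ihN =>
    intro k hN hik hxk hsx
    rcases eq_or_lt_of_le (jt.le_stage_of_mem i k hik) with he | hlt
    · rwa [he] at hxk
    · have hltx : k < jt.stage x := lt_of_lt_of_le hlt hsx
      obtain ⟨l, hkl, hadj, hil⟩ := jt.in_neighbor_of_lt i k hlt hik
      obtain ⟨l', hkl', hadj', hxl'⟩ := jt.in_neighbor_of_lt x k hltx hxk
      have heq : l' = l := jt.leaf k ⟨hkl', hadj'⟩ ⟨hkl, hadj⟩
      rw [heq] at hxl'
      have hlsi : l ≤ jt.stage i := jt.le_stage_of_mem i l hil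
      refine ihN l ?_ hil hxl' hsx
      have h1 : (k : ℕ) < (l : ℕ) := hkl
      have h2 : (l : ℕ) ≤ (jt.stage i : ℕ) := hlsi
      omega

end JTOrder

/-- If `j > ℓ` and `j ∈ V̄_ℓ`, then `V̄_ℓ ⊆ V̄_j`. -/
theorem stmt9 {p n : ℕ} {G : SimpleGraph (Fin p)} (jt : JTOrder p n G)
    (j ℓ : Fin p) (hlt : ℓ < j) (hmem : j ∈ jt.Vbar ℓ) :
    jt.Vbar ℓ ⊆ jt.Vbar j := by
  have hjB : j ∈ jt.B (jt.ρ (jt.stage ℓ)) := by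
    rcases Finset.mem_union.mp hmem with h | h
    · exact absurd (Finset.mem_filter.mp h).2 (not_lt.mpr hlt.le)
    · exact h
  intro x hx
  rcases Finset.mem_union.mp hx with h | h
  · exact Finset.mem_union_left _ (Finset.mem_filter.mpr
      ⟨Finset.mem_univ _, lt_trans (Finset.mem_filter.mp h).2 hlt⟩)
  · by_cases hxj : x < j
    · exact Finset.mem_union_left _ (Finset.mem_filter.mpr ⟨Finset.mem_univ _, hxj⟩)
    · have hjx : j ≤ x := le_of_not_gt hxj
      exact Finset.mem_union_right _
        (jt.chain j x (jt.stage j : ℕ) (jt.stage ℓ) (by omega) hjB h (jt.stageMono hjx))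
end

section
/- With variables ordered by the junction-tree leaf-elimination algorithm, if j ≠ k are adjacent in the graph G, then j ∈ V̄_k and k ∈ V̄_j. -/
open Finset

/-- Descent along a path in the junction tree: if the start vertex `u` has a
neighbor `ρ a` with larger index `a` that is not on the path, then the index of
every vertex on the path (in particular the endpoint) is at most that of `u`. -/
lemma JTOrder.descent {p n : ℕ} {G : SimpleGraph (Fin p)} (jt : JTOrder p n G) :
    ∀ {u v : Fin n} (w : jt.T.Walk u v), w.IsPath →
      ∀ a : Fin n, jt.ρ.symm u < a → jt.T.Adj (jt.ρ a) u →
      jt.ρ a ∉ w.support → jt.ρ.symm v ≤ jt.ρ.symm u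
  | _, _, SimpleGraph.Walk.nil, _, _, _, _, _ => le_refl _
  | u, v, SimpleGraph.Walk.cons (v := c) h w', hw, a, ha, hadj, hns => by
    have hw' : w'.IsPath ∧ u ∉ w'.support := (SimpleGraph.Walk.cons_isPath_iff h w').mp hw
    have hcmem : c ∈ (SimpleGraph.Walk.cons h w').support := by
      simp [SimpleGraph.Walk.support_cons]
    have hcu : c ≠ u := fun hh => (hh ▸ h).ne rfl
    have hclt : jt.ρ.symm c < jt.ρ.symm u := by
      rcases lt_trichotomy (jt.ρ.symm c) (jt.ρ.symm u) with h1 | h1 | h1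
      · exact h1
      · exact absurd (jt.ρ.symm.injective h1) hcu
      · exfalso
        have hmem1 : a ∈ {l : Fin n | jt.ρ.symm u < l ∧ jt.T.Adj (jt.ρ (jt.ρ.symm u)) (jt.ρ l)} := by
          refine ⟨ha, ?_⟩
          simpa using hadj.symm
        have hmem2 : jt.ρ.symm c ∈
            {l : Fin n | jt.ρ.symm u < l ∧ jt.T.Adj (jt.ρ (jt.ρ.symm u)) (jt.ρ l)} := by
          refine ⟨h1, ?_⟩
          simpa using h
        have := jt.leaf (jt.ρ.symm u) hmem2 hmem1
        apply hns
        have : c = jt.ρ a := by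
          have := congrArg jt.ρ this
          simpa using this
        rw [← this]
        exact hcmem
    have hadj' : jt.T.Adj (jt.ρ (jt.ρ.symm u)) c := by simpa using h
    have := jt.descent w' hw'.1 (jt.ρ.symm u) hclt hadj' (by simpa using hw'.2)
    exact le_trans this hclt.le

/-- Any junction-tree node containing `j` comes no later than `j`'s stage. -/
lemma JTOrder.le_stage {p n : ℕ} {G : SimpleGraph (Fin p)} (jt : JTOrder p n G)
    (j : Fin p) (m : Fin n) (hj : j ∈ jt.B (jt.ρ m)) : m ≤ jt.stage j := by
  by_contra hlt
  push_neg at hlt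
  have hne : jt.ρ (jt.stage j) ≠ jt.ρ m := fun hh =>
    absurd (jt.ρ.injective hh) (ne_of_lt hlt)
  obtain ⟨w0⟩ := jt.isTree.isConnected (jt.ρ (jt.stage j)) (jt.ρ m)
  obtain ⟨w, hw⟩ := w0.toPath
  obtain ⟨c, hadj, w', rfl⟩ := SimpleGraph.Walk.exists_eq_cons_of_ne hne w
  have hall := jt.rip (jt.ρ (jt.stage j)) (jt.ρ m) j (jt.mem_active j) hj
    (SimpleGraph.Walk.cons hadj w') hw
  have hjc : j ∈ jt.B c := hall c (by simp [SimpleGraph.Walk.support_cons])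
  have hw' : w'.IsPath ∧ jt.ρ (jt.stage j) ∉ w'.support :=
    (SimpleGraph.Walk.cons_isPath_iff hadj w').mp hw
  have hadjc : jt.T.Adj (jt.ρ (jt.stage j)) (jt.ρ (jt.ρ.symm c)) := by simpa using hadj
  have hclt : jt.ρ.symm c < jt.stage j := by
    rcases lt_trichotomy (jt.ρ.symm c) (jt.stage j) with h1 | h1 | h1
    · exact h1
    · exact absurd hadjc (by rw [h1]; exact fun hh => hh.ne rfl)
    · exact absurd (by simpa using hjc) (jt.not_in_neighbor j (jt.ρ.symm c) h1 hadjc)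
  have := jt.descent w' hw'.1 (jt.stage j) (by simpa using hclt)
    hadj (by simpa using hw'.2)
  simp only [Equiv.symm_apply_apply] at this
  exact absurd (le_trans this hclt.le) (not_le.mpr hlt)

/-- Key lemma: if `j ≤ k` and both lie in a common junction-tree node, then `k`
lies in the active node at `j`'s stage. -/
lemma JTOrder.key {p n : ℕ} {G : SimpleGraph (Fin p)} (jt : JTOrder p n G)
    (j k : Fin p) (hjk : j ≤ k) :
    ∀ (d : ℕ) (m : Fin n), (jt.stage j : ℕ) - (m : ℕ) ≤ d →
      j ∈ jt.B (jt.ρ m) → k ∈ jt.B (jt.ρ m) → k ∈ jt.B (jt.ρ (jt.stage j)) := by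
  intro d
  induction d with
  | zero =>
    intro m hd hj hk
    have hle : m ≤ jt.stage j := jt.le_stage j m hj
    have : m = jt.stage j := by
      apply Fin.le_antisymm hle
      have h1 : (jt.stage j : ℕ) ≤ (m : ℕ) := by omega
      exact h1
    rwa [← this]
  | succ d ih =>
    intro m hd hj hk
    have hle : m ≤ jt.stage j := jt.le_stage j m hj
    rcases eq_or_lt_of_le hle with heq | hlt
    · rwa [← heq]
    · have hltk : m < jt.stage k := lt_of_lt_of_le hlt (jt.stageMono hjk)
      obtain ⟨l₁, hl₁, hadj₁, hjl₁⟩ := jt.in_neighbor_of_lt j m hlt hj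
      obtain ⟨l₂, hl₂, hadj₂, hkl₂⟩ := jt.in_neighbor_of_lt k m hltk hk
      have : l₂ = l₁ := jt.leaf m ⟨hl₂, hadj₂⟩ ⟨hl₁, hadj₁⟩
      subst this
      refine ih l₂ ?_ hjl₁ hkl₂
      have h1 : (m : ℕ) < (l₂ : ℕ) := hl₂
      omega

/-- If `j ≠ k` are adjacent in the graph `G`, then `j ∈ V̄_k` and `k ∈ V̄_j`. -/
theorem stmt10 {p n : ℕ} {G : SimpleGraph (Fin p)} (jt : JTOrder p n G)
    (j k : Fin p) (hne : j ≠ k) (hadj : G.Adj j k) :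
    j ∈ jt.Vbar k ∧ k ∈ jt.Vbar j := by
  have main : ∀ a b : Fin p, a < b → G.Adj a b → b ∈ jt.B (jt.ρ (jt.stage a)) := by
    intro a b hab hadjab
    obtain ⟨v, hav, hbv⟩ := jt.edgeCover a b hadjab
    exact jt.key a b hab.le ((jt.stage a : ℕ) - (jt.ρ.symm v : ℕ)) (jt.ρ.symm v) le_rfl
      (by simpa using hav) (by simpa using hbv)
  rcases hne.lt_or_gt with hlt | hlt
  · constructor
    · exact Finset.mem_union_left _ (by simp [hlt])
    · exact Finset.mem_union_right _ (main j k hlt hadj)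
  · constructor
    · exact Finset.mem_union_right _ (main k j hlt hadj.symm)
    · exact Finset.mem_union_left _ (by simp [hlt])
end

section
/- Suppose A, B, C partition {1,...,p} and C separates A and B in a graph G over which the density of X factors (so X_A and X_B are conditionally independent given X_C). Suppose X̃ satisfies X̃_C = X_C almost surely, conditional pairwise exchangeability within each block: (X_D, X̃_D) ≐ (X_D, X̃_D)_{swap(j)} given X_C for each j ∈ D and D ∈ {A, B}, and (X_A, X̃_A) ⊥ (X_B, X̃_B) | X_C. Then (X, X̃) satisfies unconditional pairwise exchangeability: (X, X̃) ≐ (X, X̃)_{swap(j)} for every j ∈ {1,...,p}. -/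
/-!
Given `X_C`, the pairs `(X_A, X̃_A)` and `(X_B, X̃_B)` are independent, so the joint law of
`(X_C, (X_A, X̃_A), (X_B, X̃_B))` is the law of `X_C` composed with the product of the two
conditional laws given `X_C`. Swapping coordinate `j` inside one block preserves the joint law of
`X_C` and that block, hence its conditional law, hence the whole joint law. As `X̃_C = X_C`,
the pair `(X, X̃)` is a.s. a measurable function of the three blocks which intertwines the swap of
`j` with the blockwise swaps, and the law of `(X, X̃)` is the pushforward of the joint law.
-/

open MeasureTheory ProbabilityTheory

/-- Restriction of a vector-valued map to the coordinates in `D`. -/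
def restr {Ω : Type*} {p : ℕ} (D : Finset (Fin p)) (X : Ω → Fin p → ℝ) :
    Ω → {i : Fin p // i ∈ D} → ℝ :=
  fun ω i => X ω i

/-- Swap the coordinate `j ∈ D` of a pair of `D`-indexed vectors. -/
noncomputable def swapBlock {p : ℕ} (D : Finset (Fin p)) (j : Fin p)
    (hj : j ∈ D) :
    (({i : Fin p // i ∈ D} → ℝ) × ({i : Fin p // i ∈ D} → ℝ)) →
      (({i : Fin p // i ∈ D} → ℝ) × ({i : Fin p // i ∈ D} → ℝ)) :=
  fun z => (Function.update z.1 ⟨j, hj⟩ (z.2 ⟨j, hj⟩),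
            Function.update z.2 ⟨j, hj⟩ (z.1 ⟨j, hj⟩))

lemma condDistrib_eq_of_map_prodMk_eq {α β γ : Type*} [MeasurableSpace α] [MeasurableSpace β]
    [MeasurableSpace γ] [StandardBorelSpace γ] [Nonempty γ] {μ : Measure α} [IsFiniteMeasure μ]
    {W : α → β} {Y Y' : α → γ}
    (h : μ.map (fun ω => (W ω, Y' ω)) = μ.map (fun ω => (W ω, Y ω))) :
    condDistrib Y' W μ = condDistrib Y W μ := by
  simp only [condDistrib_def, h]

lemma map_prodMk_prodMap_eq_of_condIndepFun {Ω α β γ : Type*} [MeasurableSpace Ω]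
    [StandardBorelSpace Ω] [MeasurableSpace α] [MeasurableSpace β] [StandardBorelSpace β]
    [Nonempty β] [MeasurableSpace γ] [StandardBorelSpace γ] [Nonempty γ]
    {μ : Measure Ω} [IsProbabilityMeasure μ] {W : Ω → α} {Y : Ω → β} {Z : Ω → γ}
    {s : β → β} {t : γ → γ} (hW : Measurable W) (hY : Measurable Y) (hZ : Measurable Z)
    (hs : Measurable s) (ht : Measurable t)
    (hsY : μ.map (fun ω => (W ω, s (Y ω))) = μ.map (fun ω => (W ω, Y ω)))
    (htZ : μ.map (fun ω => (W ω, t (Z ω))) = μ.map (fun ω => (W ω, Z ω)))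
    (hYZ : Y ⟂ᵢ[W, hW; μ] Z) :
    μ.map (fun ω => (W ω, s (Y ω), t (Z ω))) = μ.map (fun ω => (W ω, Y ω, Z ω)) := by
  have hsYtZ := (condIndepFun_iff_map_prod_eq_prod_condDistrib_prod_condDistrib (hs.comp hY)
    (ht.comp hZ) hW).1 (hYZ.comp hs ht)
  rw [(condIndepFun_iff_map_prod_eq_prod_condDistrib_prod_condDistrib hY hZ hW).1 hYZ]
  refine hsYtZ.trans ?_
  rw [condDistrib_eq_of_map_prodMk_eq (Y' := s ∘ Y) hsY,
    condDistrib_eq_of_map_prodMk_eq (Y' := t ∘ Z) htZ]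

lemma map_comp_eq_of_semiconj {Ω α β : Type*} [MeasurableSpace Ω] [MeasurableSpace α]
    [MeasurableSpace β] {μ : Measure Ω} {V : Ω → α} {T : Ω → β} {g : β → α} {f : α → α}
    {t : β → β} (hg : Measurable g) (ht : Measurable t) (hT : Measurable T)
    (hV : V =ᵐ[μ] g ∘ T) (hgtf : Function.Semiconj g t f) (htT : μ.map (t ∘ T) = μ.map T) :
    μ.map (f ∘ V) = μ.map V :=
  calc μ.map (f ∘ V)
    _ = μ.map (g ∘ t ∘ T) := Measure.map_congr (hV.mono fun ω hω => by simp [hω, hgtf (T ω)])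
    _ = (μ.map (t ∘ T)).map g := (Measure.map_map hg (ht.comp hT)).symm
    _ = (μ.map T).map g := by rw [htT]
    _ = μ.map (g ∘ T) := Measure.map_map hg hT
    _ = μ.map V := (Measure.map_congr hV).symm

section Blocks

variable {p : ℕ}

noncomputable def glue (A B C : Finset (Fin p)) (a : {i : Fin p // i ∈ A} → ℝ)
    (b : {i : Fin p // i ∈ B} → ℝ) (c : {i : Fin p // i ∈ C} → ℝ) : Fin p → ℝ :=
  fun i => if hA : i ∈ A then a ⟨i, hA⟩ else if hB : i ∈ B then b ⟨i, hB⟩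
    else if hC : i ∈ C then c ⟨i, hC⟩ else 0

noncomputable def glueBlocks (A B C : Finset (Fin p)) :
    ({i : Fin p // i ∈ C} → ℝ) ×
      ((({i : Fin p // i ∈ A} → ℝ) × ({i : Fin p // i ∈ A} → ℝ)) ×
        (({i : Fin p // i ∈ B} → ℝ) × ({i : Fin p // i ∈ B} → ℝ))) →
      (Fin p → ℝ) × (Fin p → ℝ) :=
  fun z => (glue A B C z.2.1.1 z.2.2.1 z.1, glue A B C z.2.1.2 z.2.2.2 z.1)

noncomputable def blockSwap (D : Finset (Fin p)) (j : Fin p) :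
    (({i : Fin p // i ∈ D} → ℝ) × ({i : Fin p // i ∈ D} → ℝ)) →
      (({i : Fin p // i ∈ D} → ℝ) × ({i : Fin p // i ∈ D} → ℝ)) :=
  if hj : j ∈ D then swapBlock D j hj else id

lemma measurable_restr {Ω : Type*} [MeasurableSpace Ω] (D : Finset (Fin p))
    {X : Ω → Fin p → ℝ} (hX : Measurable X) : Measurable (restr D X) :=
  measurable_pi_lambda _ fun i => (measurable_pi_apply (i : Fin p)).comp hX

lemma measurable_swapBlock (D : Finset (Fin p)) (j : Fin p) (hj : j ∈ D) :
    Measurable (swapBlock D j hj) := by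
  unfold swapBlock
  fun_prop

lemma measurable_blockSwap (D : Finset (Fin p)) (j : Fin p) : Measurable (blockSwap D j) := by
  unfold blockSwap
  split_ifs with hj
  exacts [measurable_swapBlock D j hj, measurable_id]

lemma measurable_glueBlocks (A B C : Finset (Fin p)) : Measurable (glueBlocks A B C) := by
  unfold glueBlocks glue
  refine Measurable.prodMk ?_ ?_ <;>
  · refine measurable_pi_lambda _ fun i => ?_
    split_ifs <;> fun_prop

lemma glue_restrict (A B C : Finset (Fin p)) (hcover : A ∪ B ∪ C = Finset.univ)
    {u v : Fin p → ℝ} (hC : ∀ i ∈ C, v i = u i) :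
    glue A B C (fun i => v i) (fun i => v i) (fun i => u i) = v := by
  funext i
  have hi : i ∈ A ∪ B ∪ C := hcover ▸ Finset.mem_univ i
  simp only [Finset.mem_union] at hi
  unfold glue
  split_ifs with hA hB hC' <;> first | rfl | exact (hC i hC').symm | tauto

lemma swapPair_glueBlocks (A B C : Finset (Fin p)) (j : Fin p) :
    Function.Semiconj (glueBlocks A B C)
      (Prod.map id (Prod.map (blockSwap A j) (blockSwap B j))) (swapPair j) := by
  rintro ⟨c, ⟨a, a'⟩, ⟨b, b'⟩⟩
  simp only [glueBlocks, swapPair, blockSwap, Prod.map, id]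
  refine Prod.ext (funext fun i => ?_) (funext fun i => ?_) <;>
  · rcases eq_or_ne i j with rfl | hij
    · by_cases hA : i ∈ A <;> by_cases hB : i ∈ B <;> simp [glue, swapBlock, hA, hB]
    · by_cases hA : j ∈ A <;> by_cases hB : j ∈ B <;>
        simp [glue, swapBlock, hA, hB, hij, Subtype.ext_iff]

lemma map_prodMk_blockSwap_eq {Ω α : Type*} [MeasurableSpace Ω] [MeasurableSpace α]
    {μ : Measure Ω} {D : Finset (Fin p)} {j : Fin p} {W : Ω → α}
    {Y : Ω → ({i : Fin p // i ∈ D} → ℝ) × ({i : Fin p // i ∈ D} → ℝ)}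
    (h : ∀ hj : j ∈ D, μ.map (fun ω => (W ω, swapBlock D j hj (Y ω))) =
      μ.map (fun ω => (W ω, Y ω))) :
    μ.map (fun ω => (W ω, blockSwap D j (Y ω))) = μ.map (fun ω => (W ω, Y ω)) := by
  unfold blockSwap
  split_ifs with hj
  exacts [h hj, rfl]

end Blocks

theorem stmt11_general {Ω : Type*} [MeasurableSpace Ω] [StandardBorelSpace Ω]
    (μ : Measure Ω) [IsProbabilityMeasure μ] {p : ℕ}
    (A B C : Finset (Fin p))
    (hcover : A ∪ B ∪ C = Finset.univ)
    (X Xt : Ω → Fin p → ℝ) (hX : Measurable X) (hXt : Measurable Xt)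
    (hXC : Measurable (restr C X))
    (hCeq : ∀ᵐ ω ∂μ, ∀ i ∈ C, Xt ω i = X ω i)
    (hCIknock : CondIndepFun
      (MeasurableSpace.comap (restr C X) inferInstance)
      (MeasurableSpace.comap_le_iff_le_map.2 hXC.le_map)
      (fun ω => (restr A X ω, restr A Xt ω))
      (fun ω => (restr B X ω, restr B Xt ω)) μ)
    (hswapA : ∀ (j : Fin p) (hj : j ∈ A),
      μ.map (fun ω => (restr C X ω,
          swapBlock A j hj (restr A X ω, restr A Xt ω))) =
        μ.map (fun ω => (restr C X ω, (restr A X ω, restr A Xt ω))))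
    (hswapB : ∀ (j : Fin p) (hj : j ∈ B),
      μ.map (fun ω => (restr C X ω,
          swapBlock B j hj (restr B X ω, restr B Xt ω))) =
        μ.map (fun ω => (restr C X ω, (restr B X ω, restr B Xt ω)))) :
    ∀ j : Fin p,
      μ.map (fun ω => swapPair j (X ω, Xt ω)) =
        μ.map (fun ω => (X ω, Xt ω)) := by
  intro j
  have hpairA : Measurable fun ω => (restr A X ω, restr A Xt ω) :=
    (measurable_restr A hX).prodMk (measurable_restr A hXt)
  have hpairB : Measurable fun ω => (restr B X ω, restr B Xt ω) :=
    (measurable_restr B hX).prodMk (measurable_restr B hXt)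
  have hrecon : (fun ω => (X ω, Xt ω)) =ᵐ[μ] glueBlocks A B C ∘
      fun ω => (restr C X ω, (restr A X ω, restr A Xt ω), (restr B X ω, restr B Xt ω)) :=
    hCeq.mono fun ω hω => Prod.ext (glue_restrict A B C hcover fun _ _ => rfl).symm
      (glue_restrict A B C hcover hω).symm
  refine map_comp_eq_of_semiconj (measurable_glueBlocks A B C)
    (measurable_id.prodMap ((measurable_blockSwap A j).prodMap (measurable_blockSwap B j)))
    (hXC.prodMk (hpairA.prodMk hpairB)) hrecon (swapPair_glueBlocks A B C j) ?_
  exact map_prodMk_prodMap_eq_of_condIndepFun hXC hpairA hpairB (measurable_blockSwap A j)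
    (measurable_blockSwap B j) (map_prodMk_blockSwap_eq (hswapA j))
    (map_prodMk_blockSwap_eq (hswapB j)) hCIknock

/-- **Validity of divide-and-conquer knockoffs.** Suppose `A, B, C` partition
the coordinates, `X_A ⊥ X_B | X_C` (as holds when `C` separates `A` and `B` in
a graph over which the density of `X` factors), `X̃_C = X_C` a.s., within each
block `D ∈ {A, B}` the conditional law of `(X_D, X̃_D)` given `X_C` is
invariant under swapping any single coordinate `j ∈ D`, and
`(X_A, X̃_A) ⊥ (X_B, X̃_B) | X_C`. Then `(X, X̃)` satisfies unconditional
pairwise exchangeability. -/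
theorem stmt11 {Ω : Type*} [MeasurableSpace Ω] [StandardBorelSpace Ω]
    (μ : Measure Ω) [IsProbabilityMeasure μ] {p : ℕ}
    (A B C : Finset (Fin p))
    (hAB : Disjoint A B) (hAC : Disjoint A C) (hBC : Disjoint B C)
    (hcover : A ∪ B ∪ C = Finset.univ)
    (X Xt : Ω → Fin p → ℝ) (hX : Measurable X) (hXt : Measurable Xt)
    (hXC : Measurable (restr C X))
    (hCeq : ∀ᵐ ω ∂μ, ∀ i ∈ C, Xt ω i = X ω i)
    (hCI : CondIndepFun (MeasurableSpace.comap (restr C X) inferInstance)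
      (MeasurableSpace.comap_le_iff_le_map.2 hXC.le_map)
      (restr A X) (restr B X) μ)
    (hCIknock : CondIndepFun
      (MeasurableSpace.comap (restr C X) inferInstance)
      (MeasurableSpace.comap_le_iff_le_map.2 hXC.le_map)
      (fun ω => (restr A X ω, restr A Xt ω))
      (fun ω => (restr B X ω, restr B Xt ω)) μ)
    (hswapA : ∀ (j : Fin p) (hj : j ∈ A),
      μ.map (fun ω => (restr C X ω,
          swapBlock A j hj (restr A X ω, restr A Xt ω))) =
        μ.map (fun ω => (restr C X ω, (restr A X ω, restr A Xt ω))))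
    (hswapB : ∀ (j : Fin p) (hj : j ∈ B),
      μ.map (fun ω => (restr C X ω,
          swapBlock B j hj (restr B X ω, restr B Xt ω))) =
        μ.map (fun ω => (restr C X ω, (restr B X ω, restr B Xt ω)))) :
    ∀ j : Fin p,
      μ.map (fun ω => swapPair j (X ω, Xt ω)) =
        μ.map (fun ω => (X ω, Xt ω)) :=
  stmt11_general μ A B C hcover X Xt hX hXt hXC hCeq hCIknock hswapA hswapB
end

section
/- Consider any procedure in the oracle model that, given query access to an unnormalized density Φ on a finite set and an input X ∼ Φ, outputs X̃ such that (X, X̃) is pairwise exchangeable for every Φ. Then the number N of oracle queries satisfies N ≥ 2^{#{j : X_j ≠ X̃_j}} − 1 almost surely. In particular, for any possible input-output pair (x, x̃) and any nonempty S ⊆ {j : x_j ≠ x̃_j}, the procedure must have queried Φ at the point x_{ch(S)} obtained from x by replacing x_j with x̃_j for all j ∈ S. -/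
open Finset

variable {p : ℕ} {𝒳 : Type*} [Fintype 𝒳] [DecidableEq 𝒳]

/-- `ch x y S` agrees with `x` off `S` and with `y` on `S`. -/
def ch (x y : Fin p → 𝒳) (S : Finset (Fin p)) : Fin p → 𝒳 :=
  fun i => if i ∈ S then y i else x i

/-- **Complexity lower bound for knockoff sampling (complete graph case).**

We model a knockoff-sampling procedure in the oracle model as follows. There is
a finite seed space `Ω'` with seed pmf `seedP`. The procedure
`K Φ x ω = (x̃, Q)` takes the oracle (unnormalized density) `Φ`, the input
point `x` and the seed `ω`, and returns the knockoff output `x̃` together with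
the set `Q` of points at which the oracle was queried. The key structural
assumption (`hconsistent`) is that the run of the procedure depends on `Φ`
only through the values of `Φ` at queried points. Validity (`hvalid`) says
that for every positive oracle `Φ`, the (unnormalized) joint law
`J Φ x y = Φ x · P(output = y | input = x)` is pairwise exchangeable.

Then almost surely (i.e. for every input `x` and every seed of positive
probability): for every nonempty `S ⊆ {j : x_j ≠ x̃_j}` the point `ch x x̃ S`
was queried, and consequently the number of queries is at least
`2^{#{j : x_j ≠ x̃_j}} − 1`. -/
theorem stmt13 {Ω' : Type*} [Fintype Ω']
    (seedP : Ω' → ℝ) (hseed0 : ∀ ω, 0 ≤ seedP ω) (hseed1 : ∑ ω, seedP ω = 1)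
    (K : ((Fin p → 𝒳) → ℝ) → (Fin p → 𝒳) → Ω' →
      ((Fin p → 𝒳) × Finset (Fin p → 𝒳)))
    (hconsistent : ∀ (Φ Φ' : (Fin p → 𝒳) → ℝ) (x : Fin p → 𝒳) (ω : Ω'),
      (∀ z ∈ (K Φ x ω).2, Φ z = Φ' z) → K Φ x ω = K Φ' x ω)
    (hvalid : ∀ (Φ : (Fin p → 𝒳) → ℝ), (∀ z, 0 < Φ z) →
      ∀ (j : Fin p) (a b : Fin p → 𝒳),
        (Φ (Function.update a j (b j)) *
          ∑ ω ∈ univ.filter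
            (fun ω => (K Φ (Function.update a j (b j)) ω).1 =
              Function.update b j (a j)), seedP ω) =
        (Φ a * ∑ ω ∈ univ.filter (fun ω => (K Φ a ω).1 = b), seedP ω)) :
    ∀ (Φ : (Fin p → 𝒳) → ℝ), (∀ z, 0 < Φ z) →
      ∀ (x : Fin p → 𝒳) (ω : Ω'), 0 < seedP ω →
        ((∀ S : Finset (Fin p), S.Nonempty →
            (∀ i ∈ S, x i ≠ (K Φ x ω).1 i) →
            ch x (K Φ x ω).1 S ∈ (K Φ x ω).2) ∧
          2 ^ (univ.filter (fun i => x i ≠ (K Φ x ω).1 i)).card - 1 ≤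
            (K Φ x ω).2.card) := by
  intro Φ hΦ x ω hω
  -- Generalized exchangeability over a whole set S, by induction from hvalid.
  have swapS : ∀ (Ψ : (Fin p → 𝒳) → ℝ), (∀ z, 0 < Ψ z) →
      ∀ (S : Finset (Fin p)) (a b : Fin p → 𝒳),
      Ψ (ch a b S) *
        ∑ ω' ∈ univ.filter (fun ω' => (K Ψ (ch a b S) ω').1 = ch b a S), seedP ω'
      = Ψ a * ∑ ω' ∈ univ.filter (fun ω' => (K Ψ a ω').1 = b), seedP ω' := by
    intro Ψ hΨ S
    induction S using Finset.induction with
    | empty =>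
      intro a b
      have h1 : ch a b ∅ = a := by funext i; simp [ch]
      have h2 : ch b a ∅ = b := by funext i; simp [ch]
      rw [h1, h2]
    | @insert j S hj ih =>
      intro a b
      have key := hvalid Ψ hΨ j (ch a b S) (ch b a S)
      have e1 : Function.update (ch a b S) j ((ch b a S) j) = ch a b (insert j S) := by
        funext i
        by_cases hij : i = j
        · subst hij; simp [ch, Function.update, hj]
        · simp [ch, Function.update, hij]
      have e2 : Function.update (ch b a S) j ((ch a b S) j) = ch b a (insert j S) := by
        funext i
        by_cases hij : i = j
        · subst hij; simp [ch, Function.update, hj]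
        · simp [ch, Function.update, hij]
      rw [e1, e2] at key
      rw [key, ih]
  have hsumle : ∀ (Ψ : (Fin p → 𝒳) → ℝ) (a b : Fin p → 𝒳),
      ∑ ω' ∈ univ.filter (fun ω' => (K Ψ a ω').1 = b), seedP ω' ≤ 1 := by
    intro Ψ a b
    calc ∑ ω' ∈ univ.filter (fun ω' => (K Ψ a ω').1 = b), seedP ω'
        ≤ ∑ ω', seedP ω' :=
          Finset.sum_le_sum_of_subset_of_nonneg (filter_subset _ _)
            (fun i _ _ => hseed0 i)
      _ = 1 := hseed1
  have part1 : ∀ S : Finset (Fin p), S.Nonempty →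
      (∀ i ∈ S, x i ≠ (K Φ x ω).1 i) →
      ch x (K Φ x ω).1 S ∈ (K Φ x ω).2 := by
    intro S hSne hSd
    by_contra hz
    set xt := (K Φ x ω).1 with hxt
    set z := ch x xt S with hzdef
    have hzx : z ≠ x := by
      obtain ⟨i, hi⟩ := hSne
      intro h
      have h1 : z i = xt i := by simp [hzdef, ch, hi]
      rw [h] at h1
      exact hSd i hi h1
    set c := Φ x * seedP ω with hc
    have hcpos : 0 < c := mul_pos (hΦ x) hω
    set Φ' := Function.update Φ z (c / 2) with hΦ'
    have hΦ'z : Φ' z = c / 2 := by simp [hΦ']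
    have hΦ'x : Φ' x = Φ x := Function.update_of_ne (Ne.symm hzx) _ _
    have hΦ'pos : ∀ w, 0 < Φ' w := by
      intro w
      by_cases hw : w = z
      · subst hw; rw [hΦ'z]; exact half_pos hcpos
      · rw [hΦ', Function.update_of_ne hw]; exact hΦ w
    have hK : K Φ x ω = K Φ' x ω := by
      apply hconsistent
      intro w hw
      have hwz : w ≠ z := fun h => hz (h ▸ hw)
      exact (Function.update_of_ne hwz _ _).symm
    have key := swapS Φ' hΦ'pos S x xt
    rw [← hzdef, hΦ'z, hΦ'x] at key
    have hmem : ω ∈ univ.filter (fun ω' => (K Φ' x ω').1 = xt) := by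
      simp only [mem_filter, mem_univ, true_and]
      rw [← hK]
    have hge : seedP ω ≤ ∑ ω' ∈ univ.filter (fun ω' => (K Φ' x ω').1 = xt), seedP ω' :=
      Finset.single_le_sum (fun i _ => hseed0 i) hmem
    have hRHS : c ≤ Φ x * ∑ ω' ∈ univ.filter (fun ω' => (K Φ' x ω').1 = xt), seedP ω' := by
      rw [hc]
      exact mul_le_mul_of_nonneg_left hge (le_of_lt (hΦ x))
    have hLHS : c / 2 *
        ∑ ω' ∈ univ.filter (fun ω' => (K Φ' z ω').1 = ch xt x S), seedP ω' ≤ c / 2 := by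
      have := hsumle Φ' z (ch xt x S)
      nlinarith [hcpos]
    rw [key] at hLHS
    linarith
  refine ⟨part1, ?_⟩
  set xt := (K Φ x ω).1 with hxt
  set D := univ.filter (fun i => x i ≠ xt i) with hD
  set T := D.powerset.erase ∅ with hT
  have hcardT : T.card = 2 ^ D.card - 1 := by
    rw [hT, card_erase_of_mem (mem_powerset.2 (empty_subset _)), card_powerset]
  have himg : T.image (fun S => ch x xt S) ⊆ (K Φ x ω).2 := by
    intro w hw
    obtain ⟨S, hS, rfl⟩ := mem_image.1 hw
    have hS1 : S ≠ ∅ := (mem_erase.1 hS).1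
    have hS2 : S ⊆ D := mem_powerset.1 (mem_erase.1 hS).2
    exact part1 S (nonempty_iff_ne_empty.2 hS1)
      (fun i hi => (mem_filter.1 (hS2 hi)).2)
  have hsub : ∀ A B : Finset (Fin p), A ⊆ D → ch x xt A = ch x xt B → A ⊆ B := by
    intro A B hA hAB i hiA
    by_contra hiB
    have hci := congrFun hAB i
    simp only [ch, if_pos hiA, if_neg hiB] at hci
    exact (mem_filter.1 (hA hiA)).2 hci.symm
  have hinj : Set.InjOn (fun S => ch x xt S) ↑T := by
    intro S hS S' hS' hff
    have hff' : ch x xt S = ch x xt S' := hff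
    have hSD : S ⊆ D := mem_powerset.1 (mem_erase.1 (Finset.mem_coe.1 hS)).2
    have hS'D : S' ⊆ D := mem_powerset.1 (mem_erase.1 (Finset.mem_coe.1 hS')).2
    exact Finset.Subset.antisymm (hsub S S' hSD hff') (hsub S' S hS'D hff'.symm)
  calc 2 ^ D.card - 1 = T.card := hcardT.symm
    _ = (T.image (fun S => ch x xt S)).card := (Finset.card_image_of_injOn hinj).symm
    _ ≤ (K Φ x ω).2.card := card_le_card himg
end

section
/- Let X ∼ N(0, Σ) be a p-dimensional Gaussian vector with Σ positive definite, and let s ∈ R^p be such that the 2p × 2p matrix Γ(s) with diagonal blocks Σ and off-diagonal blocks Σ − diag(s) is positive semidefinite. If (X, X̃) is jointly Gaussian with mean zero and covariance Γ(s), then (X, X̃) satisfies pairwise exchangeability: for every j, swapping X_j and X̃_j preserves the joint Gaussian distribution. -/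
open MeasureTheory ProbabilityTheory Matrix

/-- A measure `ν` on `ι → ℝ` is a centered Gaussian with covariance matrix `M`
if every linear functional `x ↦ ∑ i, a i * x i` has law `N(0, aᵀ M a)`
(Cramér–Wold characterization of multivariate Gaussians). -/
def IsCenteredGaussianVec {ι : Type*} [Fintype ι] (ν : Measure (ι → ℝ))
    (M : Matrix ι ι ℝ) : Prop :=
  ∀ a : ι → ℝ,
    ν.map (fun x => ∑ i, a i * x i) =
      gaussianReal 0 (Real.toNNReal (a ⬝ᵥ M.mulVec a))

/-- The knockoff covariance matrix `Γ(s)` with diagonal blocks `Σ` and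
off-diagonal blocks `Σ − diag(s)`, indexed by `Fin p ⊕ Fin p`. -/
def knockoffCov {p : ℕ} (Sig : Matrix (Fin p) (Fin p) ℝ) (s : Fin p → ℝ) :
    Matrix (Fin p ⊕ Fin p) (Fin p ⊕ Fin p) ℝ :=
  Matrix.fromBlocks Sig (Sig - Matrix.diagonal s) (Sig - Matrix.diagonal s) Sig

/-- Swap the coordinates `inl j` and `inr j` of a `Fin p ⊕ Fin p`-indexed
vector. -/
def swapCoord {p : ℕ} (j : Fin p) :
    ((Fin p ⊕ Fin p) → ℝ) → ((Fin p ⊕ Fin p) → ℝ) :=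
  fun x k =>
    if k = Sum.inl j then x (Sum.inr j)
    else if k = Sum.inr j then x (Sum.inl j)
    else x k

/-!
A centered Gaussian law on `ι → ℝ` is determined by its covariance matrix, since by Cramér–Wold
its one-dimensional projections determine its characteristic function. Permuting coordinates by
`σ` turns the covariance `M` into `M.submatrix σ σ`, and `Γ(s)` is fixed by the transposition of
the indices of `X_j` and `X̃_j` because `Σ - diag(s)` agrees with `Σ` off the diagonal.
-/

theorem MeasureTheory.Measure.ext_of_map_sum_mul {ι : Type*} [Fintype ι] {μ ν : Measure (ι → ℝ)}
    [IsFiniteMeasure μ] [IsFiniteMeasure ν]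
    (h : ∀ a : ι → ℝ, μ.map (fun x => ∑ i, a i * x i) = ν.map (fun x => ∑ i, a i * x i)) :
    μ = ν := by
  classical
  refine Measure.ext_of_charFunDual (funext fun L => ?_)
  have hL : ⇑L = fun x => ∑ i, L (Pi.single i 1) * x i := by
    funext x
    conv_lhs => rw [pi_eq_sum_univ' x]
    simp [mul_comm]
  rw [charFunDual_eq_charFun_map_one, charFunDual_eq_charFun_map_one, hL, h]

namespace IsCenteredGaussianVec

variable {ι : Type*} [Fintype ι] {ν ν' : Measure (ι → ℝ)} {M : Matrix ι ι ℝ}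

theorem isProbabilityMeasure (h : IsCenteredGaussianVec ν M) : IsProbabilityMeasure ν :=
  have : IsProbabilityMeasure (ν.map fun x => ∑ i, (0 : ι → ℝ) i * x i) := h 0 ▸ inferInstance
  Measure.isProbabilityMeasure_of_map (fun x => ∑ i, (0 : ι → ℝ) i * x i)

theorem unique (h : IsCenteredGaussianVec ν M) (h' : IsCenteredGaussianVec ν' M) : ν = ν' :=
  have := h.isProbabilityMeasure
  have := h'.isProbabilityMeasure
  Measure.ext_of_map_sum_mul fun a => (h a).trans (h' a).symm

theorem map_comp_perm (h : IsCenteredGaussianVec ν M) (σ : Equiv.Perm ι) :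
    IsCenteredGaussianVec (ν.map (fun x => x ∘ σ)) (M.submatrix σ σ) := by
  intro a
  have hlin : (fun x : ι → ℝ => ∑ i, a i * x i) ∘ (fun x => x ∘ σ) =
      fun x => ∑ i, (a ∘ σ.symm) i * x i :=
    funext fun x => (comp_equiv_symm_dotProduct a x σ).symm
  rw [Measure.map_map (by fun_prop) (by fun_prop), hlin, h, submatrix_mulVec_equiv,
    ← comp_equiv_symm_dotProduct]

end IsCenteredGaussianVec

theorem swapCoord_eq_comp_swap {p : ℕ} (j : Fin p) (x : Fin p ⊕ Fin p → ℝ) :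
    swapCoord j x = x ∘ Equiv.swap (Sum.inl j) (Sum.inr j) := by
  funext k
  simp only [swapCoord, Function.comp_apply, Equiv.swap_apply_def]
  split_ifs <;> simp_all

theorem knockoffCov_submatrix_swap {p : ℕ} (Sig : Matrix (Fin p) (Fin p) ℝ) (s : Fin p → ℝ)
    (j : Fin p) :
    (knockoffCov Sig s).submatrix (Equiv.swap (Sum.inl j) (Sum.inr j))
      (Equiv.swap (Sum.inl j) (Sum.inr j)) = knockoffCov Sig s := by
  ext (i | i) (k | k) <;> by_cases hi : i = j <;> by_cases hk : k = j <;>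
    simp [knockoffCov, Equiv.swap_apply_def, diagonal_apply, hi, hk, Ne.symm]

theorem stmt17_general {Ω : Type*} [MeasurableSpace Ω] (μ : Measure Ω)
    {p : ℕ}
    (Sig : Matrix (Fin p) (Fin p) ℝ)
    (s : Fin p → ℝ)
    (X Xt : Ω → Fin p → ℝ) (hX : Measurable X) (hXt : Measurable Xt)
    (hGauss : IsCenteredGaussianVec
      (μ.map (fun ω => Sum.elim (X ω) (Xt ω))) (knockoffCov Sig s)) :
    ∀ j : Fin p,
      μ.map (fun ω => swapCoord j (Sum.elim (X ω) (Xt ω))) =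
        μ.map (fun ω => Sum.elim (X ω) (Xt ω)) := by
  intro j
  have hZ : Measurable fun ω => Sum.elim (X ω) (Xt ω) := measurable_pi_iff.2
    (Sum.rec (fun i => (measurable_pi_apply i).comp hX) fun i => (measurable_pi_apply i).comp hXt)
  calc μ.map (fun ω => swapCoord j (Sum.elim (X ω) (Xt ω)))
      = (μ.map fun ω => Sum.elim (X ω) (Xt ω)).map
          (fun x => x ∘ Equiv.swap (Sum.inl j) (Sum.inr j)) := by
        simp_rw [swapCoord_eq_comp_swap]
        exact (Measure.map_map (measurable_pi_lambda _ fun _ => measurable_pi_apply _) hZ).symm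
    _ = μ.map fun ω => Sum.elim (X ω) (Xt ω) :=
        (hGauss.map_comp_perm _).unique (by rwa [knockoffCov_submatrix_swap])

/-- **Gaussian knockoffs are valid.** Let `X ∼ N(0, Σ)` with `Σ` positive
definite, and let `s` be such that `Γ(s)` is positive semidefinite. If the
joint vector `(X, X̃)` is centered Gaussian with covariance `Γ(s)`, then for
every `j`, swapping `X_j` and `X̃_j` leaves the joint Gaussian law unchanged,
i.e. `(X, X̃)` satisfies pairwise exchangeability. -/
theorem stmt17 {Ω : Type*} [MeasurableSpace Ω] (μ : Measure Ω)
    [IsProbabilityMeasure μ] {p : ℕ}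
    (Sig : Matrix (Fin p) (Fin p) ℝ) (hSig : Sig.PosDef)
    (s : Fin p → ℝ) (hΓ : (knockoffCov Sig s).PosSemidef)
    (X Xt : Ω → Fin p → ℝ) (hX : Measurable X) (hXt : Measurable Xt)
    (hXGauss : IsCenteredGaussianVec (μ.map X) Sig)
    (hGauss : IsCenteredGaussianVec
      (μ.map (fun ω => Sum.elim (X ω) (Xt ω))) (knockoffCov Sig s)) :
    ∀ j : Fin p,
      μ.map (fun ω => swapCoord j (Sum.elim (X ω) (Xt ω))) =
        μ.map (fun ω => Sum.elim (X ω) (Xt ω)) :=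
  stmt17_general μ Sig s X Xt hX hXt hGauss
end

section
/- For the probability mass function on {-1,1}^{I×Ĩ} given by P(x, x̃) ∝ exp(Σ_{edges (s,t)} β_{st}(x_s x_t + x̃_s x̃_t + x_s x̃_t + x̃_s x_t) + Σ_s α_s (x_s + x̃_s)), the marginal distribution of x is in general not of the Ising form P(x) ∝ exp(Σ_{edges} β_{st} x_s x_t + Σ_s α_s x_s). In particular, for a single-edge graph on two sites with β ≠ 0, the marginal of (x_1, x_2) under the naive symmetric joint differs from the two-site Ising distribution with parameter β. -/
open Finset

/-- The spin value of a site: `true ↦ 1`, `false ↦ -1`. -/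
def spin (b : Bool) : ℝ := if b then 1 else -1

/-! The exponent of the naive joint factors as `β (x₁ + x̃₁)(x₂ + x̃₂)`, so the marginal weights of
`(1, 1)` and `(1, -1)` are `e^{4β} + 3` and `e^{-4β} + 3`. Equal normalized marginals would force
equal cross ratios with the Ising weights `e^{±β}`, but the difference of the cross products is
`8 sinh³ β`, which vanishes only at `β = 0`. -/

open Real

noncomputable def naiveMarginalWeight (β : ℝ) (a b : Bool) : ℝ :=
  ∑ c : Bool, ∑ d : Bool,
    exp (β * (spin a * spin b + spin c * spin d + spin a * spin d + spin c * spin b))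

lemma naiveMarginalWeight_true_true (β : ℝ) :
    naiveMarginalWeight β true true = exp (4 * β) + 3 := by
  norm_num [naiveMarginalWeight, spin]
  ring_nf

lemma naiveMarginalWeight_true_false (β : ℝ) :
    naiveMarginalWeight β true false = exp (-(4 * β)) + 3 := by
  norm_num [naiveMarginalWeight, spin]
  ring_nf

lemma naiveMarginalWeight_cross_sub (β : ℝ) :
    naiveMarginalWeight β true true * exp (-β) - naiveMarginalWeight β true false * exp β =
      8 * sinh β ^ 3 := by
  have h4 : exp (4 * β) = exp β ^ 4 := by rw [← exp_nat_mul]; norm_num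
  rw [naiveMarginalWeight_true_true, naiveMarginalWeight_true_false, sinh_eq, exp_neg, exp_neg,
    h4]
  field_simp
  ring

lemma mul_eq_mul_of_forall_div_eq {α : Type*} {f g : α → ℝ} {Z W : ℝ} (hW : W ≠ 0)
    (h : ∀ x, f x / Z = g x / W) (x y : α) : f x * g y = f y * g x := by
  have hg : ∀ x, g x = f x / Z * W := fun x => by rw [h x, div_mul_cancel₀ _ hW]
  rw [hg x, hg y]; ring

/-- **The naive symmetric joint does not have Ising marginals.** For the
two-site Ising model with one edge, interaction `β ≠ 0` and no external field,
the marginal of `(x₁, x₂)` under the naive joint distribution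
`P(x, x̃) ∝ exp(β(x₁x₂ + x̃₁x̃₂ + x₁x̃₂ + x̃₁x₂))` differs from the Ising
distribution `P(x) ∝ exp(β x₁ x₂)`. -/
theorem stmt18 (β : ℝ) (hβ : β ≠ 0) :
    ¬ (∀ a b : Bool,
      (∑ c : Bool, ∑ d : Bool,
          Real.exp (β * (spin a * spin b + spin c * spin d +
            spin a * spin d + spin c * spin b))) /
        (∑ a' : Bool, ∑ b' : Bool, ∑ c : Bool, ∑ d : Bool,
          Real.exp (β * (spin a' * spin b' + spin c * spin d +
            spin a' * spin d + spin c * spin b'))) =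
      Real.exp (β * (spin a * spin b)) /
        (∑ a' : Bool, ∑ b' : Bool, Real.exp (β * (spin a' * spin b')))) := by
  intro h
  have hZ : ∑ a' : Bool, ∑ b' : Bool, exp (β * (spin a' * spin b')) ≠ 0 := by positivity
  have hcross := mul_eq_mul_of_forall_div_eq
    (f := fun p : Bool × Bool => naiveMarginalWeight β p.1 p.2)
    (g := fun p => exp (β * (spin p.1 * spin p.2))) hZ (fun p => h p.1 p.2)
    (true, true) (true, false)
  have hsinh : 8 * sinh β ^ 3 = 0 := by
    rw [← naiveMarginalWeight_cross_sub]
    norm_num [spin] at hcross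
    linarith
  exact hβ (by simpa using hsinh)
end
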